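/- arXiv:math/0512023 — 7 statements merged into one kernel-verified Lean document; each statement's English description precedes it below -/
import Mathlib

section
/- Let I be a Borel-fixed monomial ideal in S = K[x_0,...,x_n] with minimal monomial generating set G(I). Then the saturation of I (with respect to the irrelevant maximal ideal (x_0,...,x_n)) is generated by the monomials obtained from G(I) by substituting x_n = 1 in each generator. -/
/-!
The saturation of `I` is `⋂ᵢ (I : xᵢ^∞)`. For a monomial ideal, `I : xₙ^∞` is generated by the
generators with `xₙ` set to `1`. The Borel property moves the whole `xₙ`-power of a generator onto
any other variable `xᵢ`, so this ideal is also contained in every `I : xᵢ^∞`.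
-/

open MvPolynomial

def IsMonomialIdeal {n : ℕ} {K : Type*} [CommRing K]
    (I : Ideal (MvPolynomial (Fin (n + 1)) K)) : Prop :=
  ∀ p ∈ I, ∀ A ∈ p.support, (monomial A (1 : K)) ∈ I

def BorelCombinatorial {n : ℕ} {K : Type*} [CommRing K]
    (I : Ideal (MvPolynomial (Fin (n + 1)) K)) : Prop :=
  ∀ A : Fin (n + 1) →₀ ℕ, monomial A (1 : K) ∈ I →
    ∀ j : Fin (n + 1), A j ≠ 0 → ∀ i : Fin (n + 1), i < j →
      monomial (A + Finsupp.single i 1 - Finsupp.single j 1) (1 : K) ∈ I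

theorem Finsupp.erase_le_of_le_single_add {σ : Type*} {A B : σ →₀ ℕ} {j : σ} {k : ℕ}
    (h : A ≤ Finsupp.single j k + B) : A.erase j ≤ B := by
  intro l
  rcases eq_or_ne l j with rfl | hl
  · simp
  · simpa [Finsupp.erase_ne hl, Finsupp.single_eq_of_ne hl] using h l

namespace Ideal

variable {R : Type*} [CommSemiring R]

def saturation (I : Ideal R) (x : R) : Ideal R where
  carrier := {f | ∃ k : ℕ, x ^ k * f ∈ I}
  add_mem' := by
    rintro f g ⟨k, hf⟩ ⟨l, hg⟩
    refine ⟨k + l, ?_⟩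
    have hsplit : x ^ (k + l) * (f + g) = x ^ l * (x ^ k * f) + x ^ k * (x ^ l * g) := by ring
    rw [hsplit]
    exact I.add_mem (I.mul_mem_left _ hf) (I.mul_mem_left _ hg)
  zero_mem' := ⟨0, by simp⟩
  smul_mem' := by
    rintro c f ⟨k, hf⟩
    exact ⟨k, by rw [smul_eq_mul, mul_left_comm]; exact I.mul_mem_left c hf⟩

theorem mem_saturation {I : Ideal R} {x f : R} : f ∈ I.saturation x ↔ ∃ k : ℕ, x ^ k * f ∈ I :=
  Iff.rfl

end Ideal

namespace MvPolynomial

variable {σ R : Type*} [CommSemiring R]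

theorem saturation_X_span_monomial (G : Set (σ →₀ ℕ)) (j : σ) :
    (Ideal.span ((fun A => monomial A (1 : R)) '' G)).saturation (X j) =
      Ideal.span ((fun A => monomial (A.erase j) (1 : R)) '' G) := by
  apply le_antisymm
  · rintro f ⟨k, hk⟩
    rw [← Set.image_image (fun A => monomial A (1 : R)) (fun A : σ →₀ ℕ => A.erase j),
      mem_ideal_span_monomial_image]
    intro B hB
    have hkB : Finsupp.single j k + B ∈ (X j ^ k * f).support := by
      rwa [mem_support_iff, X_pow_eq_monomial, coeff_monomial_mul, one_mul, ← mem_support_iff]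
    obtain ⟨A, hA, hAle⟩ := mem_ideal_span_monomial_image.1 hk _ hkB
    exact ⟨_, Set.mem_image_of_mem _ hA, Finsupp.erase_le_of_le_single_add hAle⟩
  · rw [Ideal.span_le]
    rintro _ ⟨A, hA, rfl⟩
    refine ⟨A j, Ideal.subset_span ⟨A, hA, ?_⟩⟩
    rw [X_pow_eq_monomial, monomial_mul, one_mul, Finsupp.single_add_erase]

end MvPolynomial

namespace BorelCombinatorial

variable {n : ℕ} {K : Type*} [CommRing K] {I : Ideal (MvPolynomial (Fin (n + 1)) K)}

theorem monomial_add_single_sub_single_mem (hB : BorelCombinatorial I)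
    {A : Fin (n + 1) →₀ ℕ} (hA : monomial A (1 : K) ∈ I) {i j : Fin (n + 1)} (hij : i < j) :
    ∀ t ≤ A j, monomial (A + Finsupp.single i t - Finsupp.single j t) (1 : K) ∈ I
  | 0, _ => by simpa using hA
  | t + 1, ht => by
    have hstep := hB _ (monomial_add_single_sub_single_mem hB hA hij t (by omega)) j
      (by simp [hij.ne]; omega) i hij
    convert hstep using 3
    ext l
    simp only [Finsupp.coe_tsub, Finsupp.coe_add, Pi.sub_apply, Pi.add_apply, Finsupp.single_apply]
    split_ifs <;> omega

theorem X_pow_mul_monomial_erase_last_mem (hB : BorelCombinatorial I)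
    {A : Fin (n + 1) →₀ ℕ} (hA : monomial A (1 : K) ∈ I) (i : Fin (n + 1)) :
    X i ^ A (Fin.last n) * monomial (A.erase (Fin.last n)) (1 : K) ∈ I := by
  rw [X_pow_eq_monomial, monomial_mul, one_mul]
  rcases (Fin.le_last i).lt_or_eq with hi | rfl
  · convert hB.monomial_add_single_sub_single_mem hA hi _ le_rfl using 3
    ext l
    rcases eq_or_ne l (Fin.last n) with rfl | hl
    · simp
    · simp [Finsupp.erase_ne hl, hl.symm, add_comm]
  · rwa [Finsupp.single_add_erase]

end BorelCombinatorial

theorem stmt1_general {n : ℕ} {K : Type*} [Field K]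
    (I : Ideal (MvPolynomial (Fin (n + 1)) K))
    (hB : BorelCombinatorial I)
    (G : Set (Fin (n + 1) →₀ ℕ))
    (hGen : I = Ideal.span ((fun A => monomial A (1 : K)) '' G)) :
    {f : MvPolynomial (Fin (n + 1)) K | ∀ i : Fin (n + 1), ∃ k : ℕ, (X i) ^ k * f ∈ I} =
      ↑(Ideal.span ((fun A => monomial (A.erase (Fin.last n)) (1 : K)) '' G)) := by
  have hsat : {f : MvPolynomial (Fin (n + 1)) K | ∀ i, ∃ k : ℕ, X i ^ k * f ∈ I} =
      ↑(⨅ i, I.saturation (X i)) := by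
    ext f
    simp [Ideal.mem_saturation]
  subst hGen
  rw [hsat, SetLike.coe_set_eq, ← MvPolynomial.saturation_X_span_monomial]
  refine le_antisymm (iInf_le _ _) (le_iInf fun i => ?_)
  rw [MvPolynomial.saturation_X_span_monomial, Ideal.span_le]
  rintro _ ⟨A, hA, rfl⟩
  exact ⟨A (Fin.last n), hB.X_pow_mul_monomial_erase_last_mem (Ideal.subset_span ⟨A, hA, rfl⟩) i⟩

/-- If `I` is a Borel-fixed monomial ideal with minimal monomial generating set `G`,
then the saturation of `I` (w.r.t. `(x_0, …, x_n)`) is generated by the monomials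
obtained from `G` by setting `x_n = 1` (i.e. erasing the last exponent). -/
theorem stmt1 {n : ℕ} {K : Type*} [Field K] [CharZero K]
    (I : Ideal (MvPolynomial (Fin (n + 1)) K)) (hI : IsMonomialIdeal I)
    (hB : BorelCombinatorial I)
    (G : Set (Fin (n + 1) →₀ ℕ))
    (hGen : I = Ideal.span ((fun A => monomial A (1 : K)) '' G))
    (hMin : ∀ A ∈ G,
      monomial A (1 : K) ∉ Ideal.span ((fun B => monomial B (1 : K)) '' (G \ {A}))) :
    {f : MvPolynomial (Fin (n + 1)) K | ∀ i : Fin (n + 1), ∃ k : ℕ, (X i) ^ k * f ∈ I} =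
      ↑(Ideal.span ((fun A => monomial (A.erase (Fin.last n)) (1 : K)) '' G)) :=
  stmt1_general I hB G hGen
end

section
/- The poset P(m,n) of degree-m monomials in x_0,...,x_n, ordered by the relation generated by x^B ≺ (x_i/x_{i+1})x^B, is order-isomorphic to the lattice J(m × n) of order ideals of the product of chains {1,...,m} × {1,...,n}, via the map sending x_0^{a_0}···x_n^{a_n} to the order ideal generated by the pairs (a_0 + ... + a_{j}, n - j) for 0 ≤ j ≤ n-1 (omitting pairs whose first coordinate is 0). In particular P(m,n) is a distributive lattice. -/
def BorelStep {n : ℕ} (B A : Fin (n + 1) →₀ ℕ) : Prop :=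
  ∃ i : Fin n, B i.succ ≠ 0 ∧
    A = B + Finsupp.single i.castSucc 1 - Finsupp.single i.succ 1

def BorelLE {n : ℕ} (B A : Fin (n + 1) →₀ ℕ) : Prop :=
  Relation.ReflTransGen BorelStep B A

def degSum {n : ℕ} (A : Fin (n + 1) →₀ ℕ) : ℕ := ∑ i, A i

/-- Partial sum `a_0 + ⋯ + a_j` of the exponents. -/
def partialSum {n : ℕ} (A : Fin (n + 1) →₀ ℕ) (j : ℕ) : ℕ :=
  ∑ i ∈ Finset.univ.filter (fun i : Fin (n + 1) => (i : ℕ) ≤ j), A i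

/-- The order ideal of `{1,…,m} × {1,…,n}` (encoded as `Fin m × Fin n`, with
`(p₁, p₂)` standing for the 1-based pair `(p₁+1, p₂+1)`) generated by the pairs
`(a_0 + ⋯ + a_j, n - j)` for `0 ≤ j ≤ n - 1`, omitting pairs with vanishing first
coordinate. -/
def toOrderIdeal {m n : ℕ} (A : Fin (n + 1) →₀ ℕ) : Set (Fin m × Fin n) :=
  {p | ∃ j : Fin n, (p.1 : ℕ) + 1 ≤ partialSum A (j : ℕ) ∧
        (p.2 : ℕ) + 1 ≤ n - (j : ℕ)}

section Lemmas
variable {n : ℕ}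

lemma partialSum_mono (A : Fin (n+1) →₀ ℕ) {j j' : ℕ} (h : j ≤ j') :
    partialSum A j ≤ partialSum A j' := by
  apply Finset.sum_le_sum_of_subset
  intro x hx
  simp only [Finset.mem_filter, Finset.mem_univ, true_and] at *
  omega

lemma partialSum_ge (A : Fin (n+1) →₀ ℕ) {j : ℕ} (h : n ≤ j) :
    partialSum A j = degSum A := by
  unfold partialSum degSum
  congr 1
  apply Finset.filter_true_of_mem
  intro x _
  have := x.isLt
  omega

lemma partialSum_le (A : Fin (n+1) →₀ ℕ) (j : ℕ) : partialSum A j ≤ degSum A := by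
  calc partialSum A j ≤ partialSum A (max j n) := partialSum_mono A (le_max_left _ _)
  _ = degSum A := partialSum_ge A (le_max_right _ _)

lemma partialSum_zero (A : Fin (n+1) →₀ ℕ) : partialSum A 0 = A 0 := by
  unfold partialSum
  rw [show Finset.univ.filter (fun i : Fin (n+1) => (i : ℕ) ≤ 0) = {0} by
    ext x; simp only [Finset.mem_filter, Finset.mem_univ, true_and, Finset.mem_singleton, Fin.ext_iff, Fin.val_zero, Nat.le_zero]]
  simp

lemma partialSum_succ (A : Fin (n+1) →₀ ℕ) {j : ℕ} (h : j < n) :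
    partialSum A (j+1) = partialSum A j + A ⟨j+1, by omega⟩ := by
  unfold partialSum
  rw [show Finset.univ.filter (fun i : Fin (n+1) => (i : ℕ) ≤ j+1)
      = insert (⟨j+1, by omega⟩ : Fin (n+1)) (Finset.univ.filter (fun i : Fin (n+1) => (i : ℕ) ≤ j)) by
    ext x; simp [Fin.ext_iff]; omega]
  rw [Finset.sum_insert (by simp)]
  ring

lemma mem_toOrderIdeal {m : ℕ} (A : Fin (n+1) →₀ ℕ) (p : Fin m × Fin n) :
    p ∈ toOrderIdeal (m := m) A ↔ (p.1 : ℕ) < partialSum A (n - 1 - (p.2 : ℕ)) := by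
  have hp2 := p.2.isLt
  constructor
  · rintro ⟨j, h1, h2⟩
    have hj := j.isLt
    have : (j : ℕ) ≤ n - 1 - (p.2 : ℕ) := by omega
    have := partialSum_mono A this
    omega
  · intro h
    exact ⟨⟨n - 1 - (p.2 : ℕ), by omega⟩, by simpa using h, by simp; omega⟩

lemma step_partialSum {B A : Fin (n+1) →₀ ℕ} {i : Fin n} (hi : B i.succ ≠ 0)
    (hA : A = B + Finsupp.single i.castSucc 1 - Finsupp.single i.succ 1) (j : ℕ) :
    partialSum A j = partialSum B j + (if j = (i : ℕ) then 1 else 0) := by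
  have heq : A + Finsupp.single i.succ 1 = B + Finsupp.single i.castSucc 1 := by
    ext x
    have h1 : ((Finsupp.single i.succ 1 : Fin (n+1) →₀ ℕ)) i.succ = 1 := by simp
    simp only [hA, Finsupp.coe_add, Pi.add_apply, Finsupp.tsub_apply,
      Finsupp.single_apply]
    by_cases h2 : i.succ = x
    · subst h2
      have : ¬ (i.castSucc = i.succ) := by
        simp [Fin.ext_iff]
      simp [this, hi]
      omega
    · simp [h2]
  have key : partialSum A j + partialSum (Finsupp.single i.succ 1) j
      = partialSum B j + partialSum (Finsupp.single i.castSucc 1) j := by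
    unfold partialSum
    rw [← Finset.sum_add_distrib, ← Finset.sum_add_distrib]
    apply Finset.sum_congr rfl
    intro x _
    have := Finsupp.ext_iff.mp heq x
    simpa using this
  have hs : ∀ (k : Fin (n+1)), partialSum (Finsupp.single k 1) j = if (k : ℕ) ≤ j then 1 else 0 := by
    intro k
    unfold partialSum
    simp only [Finsupp.single_apply]
    rw [Finset.sum_ite_eq]
    simp
  rw [hs, hs] at key
  have hcs : ((i.castSucc : Fin (n+1)) : ℕ) = (i : ℕ) := rfl
  have hsu : ((i.succ : Fin (n+1)) : ℕ) = (i : ℕ) + 1 := rfl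
  rw [hcs, hsu] at key
  split_ifs at key ⊢ <;> omega

lemma eq_of_partialSum_eq {A B : Fin (n+1) →₀ ℕ}
    (h : ∀ j, partialSum A j = partialSum B j) : A = B := by
  ext x
  obtain ⟨v, hv⟩ := x
  match v with
  | 0 =>
    have h0 := h 0
    rw [partialSum_zero, partialSum_zero] at h0
    have : (⟨0, hv⟩ : Fin (n+1)) = 0 := by simp [Fin.ext_iff]
    rw [this]; exact h0
  | j+1 =>
    have hj : j < n := by omega
    have h1 := h j
    have h2 := h (j+1)
    rw [partialSum_succ A hj, partialSum_succ B hj] at h2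
    omega

end Lemmas

section Lemmas2
variable {n : ℕ}

lemma subset_iff {m : ℕ} {A B : Fin (n+1) →₀ ℕ} (hA : degSum A = m) (hB : degSum B = m) :
    toOrderIdeal (m := m) A ⊆ toOrderIdeal (m := m) B ↔
      ∀ j < n, partialSum A j ≤ partialSum B j := by
  constructor
  · intro h j hj
    by_cases h0 : partialSum A j = 0
    · omega
    · have hm : partialSum A j ≤ m := hA ▸ partialSum_le A j
      have hkey : n - 1 - (n - 1 - j) = j := by omega
      have hp : (⟨⟨partialSum A j - 1, by omega⟩, ⟨n - 1 - j, by omega⟩⟩ : Fin m × Fin n)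
          ∈ toOrderIdeal (m := m) A := by
        rw [mem_toOrderIdeal]
        simp only [hkey]
        omega
      have := h hp
      rw [mem_toOrderIdeal] at this
      simp only [hkey] at this
      omega
  · intro h p hp
    rw [mem_toOrderIdeal] at hp ⊢
    have hp2 := p.2.isLt
    have := h (n - 1 - (p.2 : ℕ)) (by omega)
    omega

lemma borelLE_partialSum {A B : Fin (n+1) →₀ ℕ} (h : BorelLE A B) (j : ℕ) :
    partialSum A j ≤ partialSum B j := by
  induction h with
  | refl => exact le_refl _
  | tail _ hstep ih =>
    obtain ⟨i, hi, hc⟩ := hstep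
    have := step_partialSum hi hc j
    split_ifs at this <;> omega

lemma chain_aux {B : Fin (n+1) →₀ ℕ} :
    ∀ d, ∀ A : Fin (n+1) →₀ ℕ, degSum A = degSum B →
      (∀ j < n, partialSum A j ≤ partialSum B j) →
      (∑ j ∈ Finset.range n, (partialSum B j - partialSum A j)) ≤ d → BorelLE A B := by
  have heqcase : ∀ A : Fin (n+1) →₀ ℕ, degSum A = degSum B →
      (∀ j < n, partialSum A j = partialSum B j) → BorelLE A B := by
    intro A hd h
    have : A = B := by
      apply eq_of_partialSum_eq
      intro j
      by_cases hj : j < n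
      · exact h j hj
      · rw [partialSum_ge A (by omega), partialSum_ge B (by omega), hd]
    rw [this]
    exact Relation.ReflTransGen.refl
  intro d
  induction d with
  | zero =>
    intro A hd h hsum
    apply heqcase A hd
    intro j hj
    have hmem : j ∈ Finset.range n := Finset.mem_range.mpr hj
    have h2 := Finset.single_le_sum (f := fun k => partialSum B k - partialSum A k)
      (fun _ _ => Nat.zero_le _) hmem
    beta_reduce at h2
    have := h j hj
    omega
  | succ d ih =>
    intro A hd h hsum
    by_cases hall : ∀ j < n, partialSum B j ≤ partialSum A j
    · exact heqcase A hd (fun j hj => le_antisymm (h j hj) (hall j hj))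
    · push_neg at hall
      obtain ⟨j0, hj0, hlt⟩ := hall
      set F := (Finset.range n).filter (fun j => partialSum A j < partialSum B j) with hF
      have hne : F.Nonempty := ⟨j0, by simp [hF]; exact ⟨hj0, hlt⟩⟩
      set i := F.max' hne with hi
      have hiF : i ∈ F := F.max'_mem hne
      rw [hF, Finset.mem_filter, Finset.mem_range] at hiF
      obtain ⟨hin1, hin2⟩ := hiF
      have hmax : ∀ j ∈ F, j ≤ i := fun j hj => F.le_max' j hj
      have hnext : partialSum A i < partialSum A (i+1) := by
        by_cases hc : i + 1 < n
        · have hnm : i + 1 ∉ F := fun hmem => by have := hmax _ hmem; omega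
          have h1 : ¬ (partialSum A (i+1) < partialSum B (i+1)) := by
            intro hcon
            exact hnm (by rw [hF, Finset.mem_filter, Finset.mem_range]; exact ⟨hc, hcon⟩)
          have h2 : partialSum B i ≤ partialSum B (i+1) := partialSum_mono B (by omega)
          omega
        · have h1 : partialSum A (i+1) = degSum A := partialSum_ge A (by omega)
          have h2 : partialSum B i ≤ degSum B := partialSum_le B i
          omega
      have hsucc : partialSum A (i+1) = partialSum A i + A ⟨i+1, by omega⟩ :=
        partialSum_succ A hin1
      set ii : Fin n := ⟨i, hin1⟩ with hii
      have hval : ((ii.succ : Fin (n+1)) : ℕ) = i + 1 := rfl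
      have hApos : A ii.succ ≠ 0 := by
        have : (ii.succ : Fin (n+1)) = ⟨i+1, by omega⟩ := by
          rw [Fin.ext_iff]; exact hval
        rw [this]
        omega
      set A' := A + Finsupp.single ii.castSucc 1 - Finsupp.single ii.succ 1 with hA'
      have hstep : BorelStep A A' := ⟨ii, hApos, hA'⟩
      have hps := step_partialSum hApos hA'
      have hiv : ((ii : Fin n) : ℕ) = i := rfl
      rw [hiv] at hps
      apply Relation.ReflTransGen.head hstep
      apply ih A'
      · have h1 := hps n
        rw [if_neg (by omega), partialSum_ge A (le_refl n), partialSum_ge A' (le_refl n)] at h1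
        omega
      · intro j hj
        rw [hps j]
        split_ifs with hji
        · subst hji; omega
        · have := h j hj; omega
      · have hlt2 : ∑ j ∈ Finset.range n, (partialSum B j - partialSum A' j)
            < ∑ j ∈ Finset.range n, (partialSum B j - partialSum A j) := by
          apply Finset.sum_lt_sum
          · intro j hj
            rw [hps j]; split_ifs <;> omega
          · exact ⟨i, Finset.mem_range.mpr hin1, by rw [hps i, if_pos rfl]; omega⟩
        omega

lemma mem_iff_lt_card {m : ℕ} (T : Finset (Fin m))
    (hT : ∀ a b : Fin m, a ≤ b → b ∈ T → a ∈ T) (x : Fin m) :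
    x ∈ T ↔ (x : ℕ) < T.card := by
  constructor
  · intro hx
    have hsub : Finset.Iic x ⊆ T := fun y hy => hT y x (Finset.mem_Iic.mp hy) hx
    have := Finset.card_le_card hsub
    rw [Fin.card_Iic] at this
    omega
  · intro hx
    by_contra hmem
    have hsub : T ⊆ Finset.Iio x := by
      intro y hy
      rw [Finset.mem_Iio]
      by_contra hle
      exact hmem (hT x y (not_lt.mp hle) hy)
    have := Finset.card_le_card hsub
    rw [Fin.card_Iio] at this
    omega

end Lemmas2

/-- `P(m,n) ≅ J(𝐦 × 𝐧)`: the explicit map sending a degree-`m` monomial to the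
order ideal generated by the pairs `(a_0+⋯+a_j, n-j)` is an order isomorphism from
the Borel poset of degree-`m` monomials in `x_0,…,x_n` onto the lattice of order
ideals (lower sets) of the product of chains `𝐦 × 𝐧` ordered by inclusion. -/
theorem stmt5 {m n : ℕ} :
    (∀ A : Fin (n + 1) →₀ ℕ, degSum A = m → IsLowerSet (toOrderIdeal (m := m) A)) ∧
    (∀ A B : Fin (n + 1) →₀ ℕ, degSum A = m → degSum B = m →
      (BorelLE A B ↔ toOrderIdeal (m := m) A ⊆ toOrderIdeal (m := m) B)) ∧
    (∀ A B : Fin (n + 1) →₀ ℕ, degSum A = m → degSum B = m →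
      toOrderIdeal (m := m) A = toOrderIdeal (m := m) B → A = B) ∧
    (∀ S : Set (Fin m × Fin n), IsLowerSet S →
      ∃ A : Fin (n + 1) →₀ ℕ, degSum A = m ∧ toOrderIdeal (m := m) A = S) := by
  refine ⟨?_, ?_, ?_, ?_⟩
  · -- lower set
    intro A _ p q hle hp
    rw [mem_toOrderIdeal] at hp ⊢
    obtain ⟨h1, h2⟩ := Prod.le_def.mp hle
    rw [Fin.le_def] at h1 h2
    have := partialSum_mono A (show n - 1 - (p.2 : ℕ) ≤ n - 1 - (q.2 : ℕ) by omega)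
    omega
  · -- BorelLE iff subset
    intro A B hA hB
    constructor
    · intro h
      rw [subset_iff hA hB]
      exact fun j _ => borelLE_partialSum h j
    · intro h
      rw [subset_iff hA hB] at h
      exact chain_aux _ A (hA.trans hB.symm) h (le_refl _)
  · -- injectivity
    intro A B hA hB hI
    apply eq_of_partialSum_eq
    intro j
    by_cases hj : j < n
    · have h1 := (subset_iff hA hB).mp hI.le j hj
      have h2 := (subset_iff hB hA).mp hI.ge j hj
      omega
    · rw [partialSum_ge A (by omega), partialSum_ge B (by omega), hA, hB]
  · -- surjectivity
    intro S hS
    classical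
    set c : Fin n → ℕ := fun k => (Finset.univ.filter (fun p1 : Fin m => (p1, k) ∈ S)).card
      with hc
    have hcol : ∀ (p1 : Fin m) (k : Fin n), (p1, k) ∈ S ↔ (p1 : ℕ) < c k := by
      intro p1 k
      rw [hc]
      rw [← mem_iff_lt_card _ ?_ p1]
      · simp
      · intro a b hab hb
        simp only [Finset.mem_filter, Finset.mem_univ, true_and] at hb ⊢
        exact hS (Prod.mk_le_mk.mpr ⟨hab, le_refl _⟩) hb
    have hcm : ∀ k, c k ≤ m := by
      intro k
      rw [hc]
      calc (Finset.univ.filter (fun p1 : Fin m => (p1, k) ∈ S)).card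
          ≤ (Finset.univ : Finset (Fin m)).card := Finset.card_filter_le _ _
        _ = m := by simp
    have hcmono : ∀ k k' : Fin n, k ≤ k' → c k' ≤ c k := by
      intro k k' hk
      apply Finset.card_le_card
      intro p1 hp
      simp only [Finset.mem_filter, Finset.mem_univ, true_and] at hp ⊢
      exact hS (Prod.mk_le_mk.mpr ⟨le_refl _, hk⟩) hp
    set g : ℕ → ℕ := fun j => if h : j < n then c ⟨n-1-j, by omega⟩ else m with hg
    have hgmono : ∀ j j', j ≤ j' → g j ≤ g j' := by
      intro j j' hj
      rw [hg]
      simp only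
      split_ifs with h1 h2 h2
      · exact hcmono _ _ (by rw [Fin.mk_le_mk]; omega)
      · exact hcm _
      · omega
      · exact le_refl _
    set A := Finsupp.equivFunOnFinite.symm
      (fun x : Fin (n+1) => if (x : ℕ) = 0 then g 0 else g x - g ((x : ℕ) - 1)) with hAdef
    have hAval : ∀ x : Fin (n+1),
        A x = if (x : ℕ) = 0 then g 0 else g x - g ((x : ℕ) - 1) := by
      intro x
      rw [hAdef]
      rfl
    have hps : ∀ j, j ≤ n → partialSum A j = g j := by
      intro j
      induction j with
      | zero =>
        intro _
        rw [partialSum_zero, hAval]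
        simp
      | succ j ihj =>
        intro hj
        rw [partialSum_succ A (by omega), ihj (by omega), hAval]
        have hmono := hgmono j (j+1) (by omega)
        simp only [Fin.val_mk]
        rw [if_neg (by omega), Nat.add_sub_cancel]
        omega
    have hdeg : degSum A = m := by
      have h1 := hps n (le_refl n)
      rw [partialSum_ge A (le_refl n)] at h1
      rw [h1, hg]
      simp
    refine ⟨A, hdeg, ?_⟩
    ext p
    rw [mem_toOrderIdeal]
    have hp2 := p.2.isLt
    rw [hps (n - 1 - (p.2 : ℕ)) (by omega)]
    rw [hg]
    simp only
    rw [dif_pos (by omega)]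
    have hfin : (⟨n - 1 - (n - 1 - (p.2 : ℕ)), by omega⟩ : Fin n) = p.2 := by
      rw [Fin.ext_iff]
      simp
      omega
    rw [hfin]
    rw [← hcol p.1 p.2]
end

section
/- The posets P(m,n) and P(n,m) are isomorphic, where P(m,n) is the poset of degree-m monomials in n+1 variables ordered by the Borel order. -/
open Finset

/-- partial sum `A 0 + ⋯ + A (j-1)`. -/
def pS {n : ℕ} (A : Fin (n + 1) →₀ ℕ) (j : ℕ) : ℕ :=
  ∑ t : Fin (n + 1), if t.val < j then A t else 0

/-- number of indices `j ∈ [1,n]` with `pS A j ≥ m + 1 - k`. -/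
def pU (m : ℕ) {n : ℕ} (A : Fin (n + 1) →₀ ℕ) (k : ℕ) : ℕ :=
  ((Finset.Icc 1 n).filter (fun j => m + 1 ≤ k + pS A j)).card

/-- the transpose map. -/
noncomputable def phi (m : ℕ) {n : ℕ} (A : Fin (n + 1) →₀ ℕ) : Fin (m + 1) →₀ ℕ :=
  Finsupp.equivFunOnFinite.symm (fun k => pU m A (k.val + 1) - pU m A k.val)

lemma phi_apply (m : ℕ) {n : ℕ} (A : Fin (n + 1) →₀ ℕ) (k : Fin (m + 1)) :
    phi m A k = pU m A (k.val + 1) - pU m A k.val := rfl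

lemma pS_mono {n : ℕ} (A : Fin (n + 1) →₀ ℕ) {j j' : ℕ} (h : j ≤ j') :
    pS A j ≤ pS A j' := by
  apply Finset.sum_le_sum
  intro t _
  split_ifs with h1 h2 <;> omega

lemma pS_zero {n : ℕ} (A : Fin (n + 1) →₀ ℕ) : pS A 0 = 0 := by
  simp [pS]

lemma pS_succ {n : ℕ} (A : Fin (n + 1) →₀ ℕ) {j : ℕ} (hj : j ≤ n) :
    pS A (j + 1) = pS A j + A ⟨j, by omega⟩ := by
  have : ∀ t : Fin (n + 1), (if t.val < j + 1 then A t else 0)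
      = (if t.val < j then A t else 0) + (if t = ⟨j, by omega⟩ then A t else 0) := by
    intro t
    rcases eq_or_ne t (⟨j, by omega⟩ : Fin (n + 1)) with rfl | h
    · simp
    · have : t.val ≠ j := fun hv => h (Fin.ext hv)
      split_ifs <;> omega
  rw [pS, Finset.sum_congr rfl (fun t _ => this t), Finset.sum_add_distrib]
  rw [Finset.sum_ite_eq' Finset.univ (⟨j, by omega⟩ : Fin (n + 1)) (fun t => A t)]
  simp [pS]

lemma pS_ge {n : ℕ} (A : Fin (n + 1) →₀ ℕ) {j : ℕ} (hj : n + 1 ≤ j) :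
    pS A j = degSum A := by
  apply Finset.sum_congr rfl
  intro t _
  have : t.val < j := by omega
  simp [this]

lemma pS_le_deg {n : ℕ} (A : Fin (n + 1) →₀ ℕ) (j : ℕ) : pS A j ≤ degSum A := by
  apply Finset.sum_le_sum
  intro t _
  split_ifs <;> simp

lemma pU_mono (m : ℕ) {n : ℕ} (A : Fin (n + 1) →₀ ℕ) {k k' : ℕ} (h : k ≤ k') :
    pU m A k ≤ pU m A k' := by
  apply Finset.card_le_card
  intro j hj
  rw [Finset.mem_filter] at *
  exact ⟨hj.1, by omega⟩

lemma pU_zero (m : ℕ) {n : ℕ} (A : Fin (n + 1) →₀ ℕ) (h : degSum A = m) :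
    pU m A 0 = 0 := by
  rw [pU, Finset.card_eq_zero, Finset.filter_eq_empty_iff]
  intro j _
  have := pS_le_deg A j
  omega

lemma pU_ge (m : ℕ) {n : ℕ} (A : Fin (n + 1) →₀ ℕ) {k : ℕ} (hk : m + 1 ≤ k) :
    pU m A k = n := by
  rw [pU, Finset.filter_true_of_mem (fun j _ => by omega), Nat.card_Icc]
  omega

lemma pU_le (m : ℕ) {n : ℕ} (A : Fin (n + 1) →₀ ℕ) (k : ℕ) : pU m A k ≤ n := by
  calc pU m A k ≤ (Finset.Icc 1 n).card := Finset.card_le_card (Finset.filter_subset _ _)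
  _ = n := by rw [Nat.card_Icc]; omega

lemma deg_phi (m : ℕ) {n : ℕ} (A : Fin (n + 1) →₀ ℕ) (h : degSum A = m) :
    degSum (phi m A) = n := by
  have : degSum (phi m A) = ∑ k ∈ Finset.range (m + 1), (pU m A (k + 1) - pU m A k) := by
    rw [degSum, ← Fin.sum_univ_eq_sum_range]
    rfl
  rw [this, Finset.sum_range_tsub (fun a b hab => pU_mono m A hab)]
  rw [pU_ge m A (by omega), pU_zero m A h]
  omega

lemma pS_phi (m : ℕ) {n : ℕ} (A : Fin (n + 1) →₀ ℕ) (h : degSum A = m) (l : ℕ) :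
    pS (phi m A) l = pU m A l := by
  induction l with
  | zero => rw [pS_zero, pU_zero m A h]
  | succ l ih =>
    rcases le_or_gt l m with hl | hl
    · rw [pS_succ (phi m A) hl, ih, phi_apply]
      simp only [Fin.val_mk, Nat.succ_eq_add_one]
      have := pU_mono m A (by omega : l ≤ l + 1)
      omega
    · rw [pS_ge (phi m A) (by omega), deg_phi m A h, pU_ge m A (by omega)]

lemma pU_phi (m : ℕ) {n : ℕ} (A : Fin (n + 1) →₀ ℕ) (h : degSum A = m) (j : ℕ) :
    pU n (phi m A) j = pS A j := by
  have hrw : pU n (phi m A) j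
      = ((Finset.Icc 1 m).filter (fun l => n + 1 ≤ j + pU m A l)).card := by
    rw [pU]
    congr 1
    apply Finset.filter_congr
    intro l _
    rw [pS_phi m A h l]
  rw [hrw]
  rcases le_or_gt (n + 1) j with hj | hj
  · -- everything counts
    rw [Finset.filter_true_of_mem (fun l _ => by omega), Nat.card_Icc, pS_ge A hj, h]
    omega
  rcases Nat.eq_zero_or_pos j with rfl | hj1
  · rw [pS_zero, Finset.card_eq_zero, Finset.filter_eq_empty_iff]
    intro l _
    have := pU_le m A l
    omega
  -- 1 ≤ j ≤ n
  have key : ∀ l ∈ Finset.Icc 1 m, (n + 1 ≤ j + pU m A l ↔ m + 1 ≤ l + pS A j) := by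
    intro l hl
    rw [Finset.mem_Icc] at hl
    constructor
    · intro hle
      by_contra hcon
      push_neg at hcon
      have hsub : (Finset.Icc 1 n).filter (fun j' => m + 1 ≤ l + pS A j')
          ⊆ Finset.Icc (j + 1) n := by
        intro j' hj'
        rw [Finset.mem_filter, Finset.mem_Icc] at hj'
        rw [Finset.mem_Icc]
        refine ⟨?_, hj'.1.2⟩
        by_contra hc
        push_neg at hc
        have := pS_mono A (show j' ≤ j by omega)
        omega
      have := Finset.card_le_card hsub
      rw [Nat.card_Icc] at this
      rw [pU] at hle
      omega
    · intro hle
      have hsub : Finset.Icc j n ⊆ (Finset.Icc 1 n).filter (fun j' => m + 1 ≤ l + pS A j') := by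
        intro j' hj'
        rw [Finset.mem_Icc] at hj'
        rw [Finset.mem_filter, Finset.mem_Icc]
        have := pS_mono A hj'.1
        refine ⟨⟨by omega, hj'.2⟩, by omega⟩
      have := Finset.card_le_card hsub
      rw [Nat.card_Icc] at this
      rw [pU]
      omega
  rw [Finset.filter_congr key]
  have hs : pS A j ≤ m := h ▸ pS_le_deg A j
  have : (Finset.Icc 1 m).filter (fun l => m + 1 ≤ l + pS A j)
      = Finset.Icc (m + 1 - pS A j) m := by
    ext l
    rw [Finset.mem_filter, Finset.mem_Icc, Finset.mem_Icc]
    omega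
  rw [this, Nat.card_Icc]
  omega

lemma phi_phi (m : ℕ) {n : ℕ} (A : Fin (n + 1) →₀ ℕ) (h : degSum A = m) :
    phi n (phi m A) = A := by
  ext t
  rw [phi_apply, pU_phi m A h, pU_phi m A h, pS_succ A (by omega)]
  simp

lemma step_eq {n : ℕ} (A : Fin (n + 1) →₀ ℕ) (i : Fin n) (hA : A i.succ ≠ 0) :
    (A + Finsupp.single i.castSucc 1 - Finsupp.single i.succ 1) + Finsupp.single i.succ 1
      = A + Finsupp.single i.castSucc 1 := by
  ext t
  have hne : i.castSucc ≠ i.succ := (Fin.castSucc_lt_succ : i.castSucc < i.succ).ne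
  simp only [Finsupp.add_apply, Finsupp.tsub_apply, Finsupp.single_apply]
  rcases eq_or_ne i.succ t with rfl | ht
  · rw [if_neg hne, if_pos rfl]
    omega
  · rw [if_neg ht]
    omega

lemma deg_single {n : ℕ} (a : Fin (n + 1)) : degSum (Finsupp.single a 1) = 1 := by
  rw [degSum]
  have : ∀ t : Fin (n + 1), (Finsupp.single a 1 : Fin (n + 1) →₀ ℕ) t
      = if t = a then 1 else 0 := by
    intro t
    rw [Finsupp.single_apply]
    split_ifs with h1 h2 h2 <;> first | rfl | (exfalso; first | exact h2 h1.symm | exact h1 h2.symm)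
  rw [Finset.sum_congr rfl (fun t _ => this t), Finset.sum_ite_eq' Finset.univ a (fun _ => 1)]
  simp

lemma deg_add {n : ℕ} (A B : Fin (n + 1) →₀ ℕ) : degSum (A + B) = degSum A + degSum B := by
  rw [degSum, degSum, degSum, ← Finset.sum_add_distrib]
  exact Finset.sum_congr rfl (fun t _ => Finsupp.add_apply A B t)

lemma deg_step {n : ℕ} {A B : Fin (n + 1) →₀ ℕ} (h : BorelStep A B) :
    degSum B = degSum A := by
  obtain ⟨i, hA, rfl⟩ := h
  have := congrArg degSum (step_eq A i hA)
  rw [deg_add, deg_add, deg_single, deg_single] at this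
  omega

lemma pS_add {n : ℕ} (A B : Fin (n + 1) →₀ ℕ) (j : ℕ) :
    pS (A + B) j = pS A j + pS B j := by
  rw [pS, pS, pS, ← Finset.sum_add_distrib]
  apply Finset.sum_congr rfl
  intro t _
  rw [Finsupp.add_apply]
  split_ifs <;> simp

lemma pS_single {n : ℕ} (a : Fin (n + 1)) (j : ℕ) :
    pS (Finsupp.single a 1) j = if a.val < j then 1 else 0 := by
  rw [pS]
  have : ∀ t : Fin (n + 1), (if t.val < j then (Finsupp.single a 1 : Fin (n + 1) →₀ ℕ) t else 0)
      = if t = a then (if t.val < j then 1 else 0) else 0 := by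
    intro t
    rw [Finsupp.single_apply]
    rcases eq_or_ne t a with rfl | h
    · simp
    · rw [if_neg (Ne.symm h)]
      simp [h]
  rw [Finset.sum_congr rfl (fun t _ => this t),
    Finset.sum_ite_eq' Finset.univ a (fun t => if t.val < j then 1 else 0)]
  simp

lemma pS_step {n : ℕ} (A : Fin (n + 1) →₀ ℕ) (i : Fin n) (hA : A i.succ ≠ 0) (j : ℕ) :
    pS (A + Finsupp.single i.castSucc 1 - Finsupp.single i.succ 1) j
      = pS A j + (if j = i.val + 1 then 1 else 0) := by
  have := congrArg (fun X => pS X j) (step_eq A i hA)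
  simp only [pS_add, pS_single] at this
  have h1 : (i.castSucc : Fin (n + 1)).val = i.val := rfl
  have h2 : (i.succ : Fin (n + 1)).val = i.val + 1 := rfl
  rw [h1, h2] at this
  split_ifs at this ⊢ <;> omega

lemma pU_step {m n : ℕ} (A : Fin (n + 1) →₀ ℕ) (i : Fin n) (hA : A i.succ ≠ 0) (k : ℕ) :
    pU m (A + Finsupp.single i.castSucc 1 - Finsupp.single i.succ 1) k
      = pU m A k + (if k + pS A (i.val + 1) = m then 1 else 0) := by
  have hi := i.isLt
  by_cases hk : k + pS A (i.val + 1) = m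
  · rw [if_pos hk, pU]
    have hmem : i.val + 1 ∈ Finset.Icc 1 n := by rw [Finset.mem_Icc]; omega
    have hfe : (Finset.Icc 1 n).filter
          (fun j => m + 1 ≤ k + pS (A + Finsupp.single i.castSucc 1 - Finsupp.single i.succ 1) j)
        = insert (i.val + 1) ((Finset.Icc 1 n).filter (fun j => m + 1 ≤ k + pS A j)) := by
      ext j
      rw [Finset.mem_insert, Finset.mem_filter, Finset.mem_filter, pS_step A i hA j]
      constructor
      · rintro ⟨hj1, hj2⟩
        by_cases hji : j = i.val + 1
        · exact Or.inl hji
        · right; rw [if_neg hji] at hj2; exact ⟨hj1, by omega⟩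
      · rintro (rfl | ⟨hj1, hj2⟩)
        · rw [if_pos rfl]
          exact ⟨hmem, by omega⟩
        · split_ifs <;> exact ⟨hj1, by omega⟩
    rw [hfe, Finset.card_insert_of_notMem, pU]
    rw [Finset.mem_filter]
    rintro ⟨-, hc⟩
    omega
  · rw [if_neg hk, pU, pU]
    have hfe : (Finset.Icc 1 n).filter
          (fun j => m + 1 ≤ k + pS (A + Finsupp.single i.castSucc 1 - Finsupp.single i.succ 1) j)
        = (Finset.Icc 1 n).filter (fun j => m + 1 ≤ k + pS A j) := by
      apply Finset.filter_congr
      intro j _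
      rw [pS_step A i hA j]
      split_ifs with hji
      · subst hji; constructor <;> intro <;> omega
      · omega
    rw [hfe]
    omega

lemma s_lt {m n : ℕ} (A : Fin (n + 1) →₀ ℕ) (h : degSum A = m) (i : Fin n)
    (hA : A i.succ ≠ 0) : pS A (i.val + 1) + 1 ≤ m := by
  have hi := i.isLt
  have h2 : pS A (i.val + 1 + 1) = pS A (i.val + 1) + A ⟨i.val + 1, by omega⟩ :=
    pS_succ A (by omega)
  have h3 : A ⟨i.val + 1, by omega⟩ = A i.succ := congrArg A (Fin.ext rfl)
  have h4 := pS_le_deg A (i.val + 1 + 1)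
  rw [h] at h4
  omega

lemma phi_strict {m n : ℕ} (A : Fin (n + 1) →₀ ℕ) (h : degSum A = m) (i : Fin n)
    (hA : A i.succ ≠ 0) {k : ℕ} (hk : k + pS A (i.val + 1) = m) :
    pU m A k < pU m A (k + 1) := by
  have hi := i.isLt
  have hs := s_lt A h i hA
  apply Finset.card_lt_card
  rw [Finset.ssubset_iff_of_subset]
  · refine ⟨i.val + 1, ?_, ?_⟩
    · rw [Finset.mem_filter, Finset.mem_Icc]
      omega
    · rw [Finset.mem_filter]
      rintro ⟨-, hc⟩
      omega
  · intro j hj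
    rw [Finset.mem_filter] at *
    exact ⟨hj.1, by omega⟩

lemma phi_step {m n : ℕ} (A : Fin (n + 1) →₀ ℕ) (h : degSum A = m) (i : Fin n)
    (hA : A i.succ ≠ 0) (i' : Fin m) (hv : i'.val + 1 + pS A (i.val + 1) = m) :
    phi m (A + Finsupp.single i.castSucc 1 - Finsupp.single i.succ 1)
      = phi m A + Finsupp.single i'.castSucc 1 - Finsupp.single i'.succ 1
    ∧ phi m A i'.succ ≠ 0 := by
  have hs := s_lt A h i hA
  constructor
  · ext k'
    rw [phi_apply, Finsupp.tsub_apply, Finsupp.add_apply, phi_apply,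
      Finsupp.single_apply, Finsupp.single_apply, pU_step A i hA, pU_step A i hA]
    have hmono1 : pU m A k'.val ≤ pU m A (k'.val + 1) := pU_mono m A (by omega)
    have hst : k'.val + pS A (i.val + 1) = m → pU m A k'.val + 1 ≤ pU m A (k'.val + 1) :=
      fun hh => phi_strict A h i hA hh
    have e1 : ((i'.castSucc : Fin (m + 1)) = k') ↔ (i'.val = k'.val) := Fin.ext_iff
    have e2 : ((i'.succ : Fin (m + 1)) = k') ↔ (i'.val + 1 = k'.val) := Fin.ext_iff
    simp only [e1, e2]
    split_ifs <;> omega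
  · rw [phi_apply]
    have e3 : (i'.succ : Fin (m + 1)).val = i'.val + 1 := rfl
    rw [e3]
    have := phi_strict A h i hA (k := i'.val + 1) (by omega)
    omega

lemma step_phi {m n : ℕ} {A B : Fin (n + 1) →₀ ℕ} (h : degSum A = m)
    (hst : BorelStep A B) : BorelStep (phi m A) (phi m B) := by
  obtain ⟨i, hA, rfl⟩ := hst
  have hs := s_lt A h i hA
  have hm : 0 < m := by omega
  have hlt : m - 1 - pS A (i.val + 1) < m := by omega
  obtain ⟨heq, hne⟩ := phi_step A h i hA ⟨m - 1 - pS A (i.val + 1), hlt⟩ (by simp; omega)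
  exact ⟨_, hne, heq⟩

lemma step_lift {m n : ℕ} (A : Fin (n + 1) →₀ ℕ) (h : degSum A = m)
    (C : Fin (m + 1) →₀ ℕ) (hst : BorelStep (phi m A) C) :
    ∃ B, BorelStep A B ∧ phi m B = C := by
  obtain ⟨i', hne, rfl⟩ := hst
  have hi' := i'.isLt
  have hne' : pU m A (i'.val + 1) < pU m A (i'.val + 1 + 1) := by
    rw [phi_apply] at hne
    have e3 : (i'.succ : Fin (m + 1)).val = i'.val + 1 := rfl
    rw [e3] at hne
    have := pU_mono m A (show i'.val + 1 ≤ i'.val + 1 + 1 by omega)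
    omega
  obtain ⟨j0, hj0b, hj0s⟩ : ∃ j0, j0 ∈ (Finset.Icc 1 n).filter
        (fun j => m + 1 ≤ i'.val + 1 + 1 + pS A j)
      ∧ j0 ∉ (Finset.Icc 1 n).filter (fun j => m + 1 ≤ i'.val + 1 + pS A j) := by
    by_contra hcon
    push_neg at hcon
    have hsub := Finset.card_le_card (fun x hx => hcon x hx)
    rw [pU, pU] at hne'
    omega
  rw [Finset.mem_filter, Finset.mem_Icc] at hj0b
  rw [Finset.mem_filter, Finset.mem_Icc] at hj0s
  have hj0v : pS A j0 = m - (i'.val + 1) := by omega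
  obtain ⟨js, hjsmem, hjsmax⟩ : ∃ js, js ∈ (Finset.Icc 1 n).filter
        (fun j => pS A j = m - (i'.val + 1))
      ∧ ∀ j' ∈ (Finset.Icc 1 n).filter (fun j => pS A j = m - (i'.val + 1)), j' ≤ js := by
    have hTne : ((Finset.Icc 1 n).filter (fun j => pS A j = m - (i'.val + 1))).Nonempty :=
      ⟨j0, by rw [Finset.mem_filter, Finset.mem_Icc]; exact ⟨⟨hj0b.1.1, hj0b.1.2⟩, hj0v⟩⟩
    exact ⟨_, Finset.max'_mem _ hTne, fun j' hj' => Finset.le_max' _ j' hj'⟩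
  rw [Finset.mem_filter, Finset.mem_Icc] at hjsmem
  obtain ⟨⟨hjs1, hjs2⟩, hjsv⟩ := hjsmem
  have hnext : pS A js + 1 ≤ pS A (js + 1) := by
    rcases eq_or_lt_of_le hjs2 with heqn | hlt
    · rw [pS_ge A (by omega : n + 1 ≤ js + 1), h]
      omega
    · have hmono := pS_mono A (show js ≤ js + 1 by omega)
      rcases eq_or_lt_of_le hmono with heq | hlt2
      · exfalso
        have hmem2 : js + 1 ∈ (Finset.Icc 1 n).filter (fun j => pS A j = m - (i'.val + 1)) := by
          rw [Finset.mem_filter, Finset.mem_Icc]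
          exact ⟨⟨by omega, by omega⟩, by omega⟩
        have := hjsmax _ hmem2
        omega
      · omega
  have hjn : js - 1 < n := by omega
  set i : Fin n := ⟨js - 1, hjn⟩ with hidef
  have hiv : i.val + 1 = js := by simp [hidef]; omega
  have hisucc : (i.succ : Fin (n + 1)) = ⟨js, by omega⟩ := Fin.ext (by simp [hidef]; omega)
  have hAi : A i.succ ≠ 0 := by
    have h2 : pS A (js + 1) = pS A js + A ⟨js, by omega⟩ := pS_succ A (by omega)
    rw [hisucc]
    omega
  have hval : pS A (i.val + 1) = m - (i'.val + 1) := by rw [hiv]; exact hjsv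
  obtain ⟨heq, -⟩ := phi_step A h i hAi i' (by omega)
  exact ⟨_, ⟨i, hAi, rfl⟩, heq⟩

lemma deg_le {n : ℕ} {A B : Fin (n + 1) →₀ ℕ} (h : BorelLE A B) : degSum B = degSum A := by
  induction h with
  | refl => rfl
  | tail _ hstep ih => rw [deg_step hstep, ih]

lemma le_phi {m n : ℕ} {A B : Fin (n + 1) →₀ ℕ} (h : degSum A = m)
    (hle : BorelLE A B) : BorelLE (phi m A) (phi m B) := by
  induction hle with
  | refl => exact Relation.ReflTransGen.refl
  | @tail C D hAC hstep ih =>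
    exact ih.tail (step_phi (by rw [deg_le hAC, h]) hstep)

lemma lift_le {m n : ℕ} {A : Fin (n + 1) →₀ ℕ} (h : degSum A = m)
    {C : Fin (m + 1) →₀ ℕ} (hle : BorelLE (phi m A) C) :
    ∃ B, BorelLE A B ∧ phi m B = C := by
  induction hle with
  | refl => exact ⟨A, Relation.ReflTransGen.refl, rfl⟩
  | @tail D E hAD hstep ih =>
    obtain ⟨B', hB', rfl⟩ := ih
    have hB'deg : degSum B' = m := by rw [deg_le hB', h]
    obtain ⟨B'', h1, h2⟩ := step_lift B' hB'deg E hstep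
    exact ⟨B'', hB'.tail h1, h2⟩

/-- The posets `P(m,n)` and `P(n,m)` are isomorphic: there is a bijection between
degree-`m` monomials in `n+1` variables and degree-`n` monomials in `m+1` variables
preserving and reflecting the Borel order. -/
theorem stmt6 {m n : ℕ} :
    ∃ φ : (Fin (n + 1) →₀ ℕ) → (Fin (m + 1) →₀ ℕ),
      (∀ A, degSum A = m → degSum (φ A) = n) ∧
      (∀ A B, degSum A = m → degSum B = m → (BorelLE A B ↔ BorelLE (φ A) (φ B))) ∧
      (∀ A B, degSum A = m → degSum B = m → φ A = φ B → A = B) ∧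
      (∀ C : Fin (m + 1) →₀ ℕ, degSum C = n →
        ∃ A : Fin (n + 1) →₀ ℕ, degSum A = m ∧ φ A = C) := by
  refine ⟨phi m, fun A hA => deg_phi m A hA, ?_, ?_, ?_⟩
  · intro A B hA hB
    constructor
    · exact le_phi hA
    · intro hle
      obtain ⟨B', h1, h2⟩ := lift_le hA hle
      have hB'deg : degSum B' = m := by rw [deg_le h1, hA]
      have : B' = B := by
        rw [← phi_phi m B' hB'deg, h2, phi_phi m B hB]
      rwa [this] at h1
  · intro A B hA hB hAB
    rw [← phi_phi m A hA, hAB, phi_phi m B hB]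
  · intro C hC
    exact ⟨phi n C, deg_phi n C hC, phi_phi n C hC⟩
end

section
/- Let x^A be a degree-m monomial in x_0,...,x_n, written as x_{a_1}···x_{a_m} with a_1 ≤ ... ≤ a_m. Define the degree-n monomial y^B in y_0,...,y_m by b_0 = n - a_m, b_i = a_{m-i+1} - a_{m-i} for 1 ≤ i ≤ m-1, and b_m = a_1. Then for any two degree-m monomials x^{A_1}, x^{A_2} with images y^{B_1}, y^{B_2}: x^{A_1} <_Lex x^{A_2} if and only if y^{B_1} <_RevLex y^{B_2}. -/
/-!
Both orders are decided by the first index `t` at which the sorted sequences `a₁`, `a₂` differ;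
say `a₂ t < a₁ t`. Below `t` the sequences agree and from `t` on `a₁` exceeds `a₂ t`, so every
variable of index `< a₂ t` occurs equally often in `x^{A₁}` and `x^{A₂}`, while `x_{a₂ t}` occurs
strictly more often in `x^{A₂}`: hence `x^{A₁} <_Lex x^{A₂}`. On the flipped side, the entries of
`B₁`, `B₂` beyond position `m - t` only involve `a j` for `j < t`, and at position `m - t`
one has `a₂ t - a₂ (t-1) < a₁ t - a₁ (t-1)` (or `a₂ 0 < a₁ 0` if `t = 0`): hence
`y^{B₁} <_RevLex y^{B₂}`. Since both orders are asymmetric, trichotomy of the first difference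
gives the equivalence.
-/

/-- `x^{A_1} <_Lex x^{A_2}`: at the first index where the exponent vectors differ,
`A_1` has the smaller exponent. -/
def lexLT {k : ℕ} (A B : Fin k → ℕ) : Prop :=
  ∃ i : Fin k, A i < B i ∧ ∀ j : Fin k, j < i → A j = B j

/-- `x^{A} <_RevLex x^{B}` (same degree): at the last index where they differ,
`A` has the larger exponent (last nonzero entry of `A - B` is positive). -/
def revLexLT {k : ℕ} (A B : Fin k → ℕ) : Prop :=
  ∃ i : Fin k, B i < A i ∧ ∀ j : Fin k, i < j → A j = B j

/-- The exponent vector of `x_{a_1} ⋯ x_{a_m}` (zero-based sequence `a 0 ≤ … ≤ a (m-1)`). -/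
def expOf (n m : ℕ) (a : ℕ → ℕ) : Fin (n + 1) → ℕ :=
  fun x => ((Finset.range m).filter (fun i => a i = (x : ℕ))).card

/-- The flipped exponent vector: `b_0 = n - a_m`, `b_i = a_{m-i+1} - a_{m-i}`
for `1 ≤ i ≤ m-1`, `b_m = a_1` (in zero-based indexing of the sequence `a`). -/
def flipOf (n m : ℕ) (a : ℕ → ℕ) : Fin (m + 1) → ℕ :=
  fun i => if (i : ℕ) = 0 then n - a (m - 1)
    else if (i : ℕ) = m then a 0
    else a (m - (i : ℕ)) - a (m - (i : ℕ) - 1)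

lemma lexLT_iff_toLex_lt {k : ℕ} {A B : Fin k → ℕ} : lexLT A B ↔ toLex A < toLex B :=
  exists_congr fun _ => and_comm

lemma revLexLT_iff_toColex_lt {k : ℕ} {A B : Fin k → ℕ} : revLexLT A B ↔ toColex B < toColex A :=
  exists_congr fun _ => and_comm.trans <| and_congr_left' <| forall₂_congr fun _ _ => eq_comm

lemma lexLT_asymm {k : ℕ} {A B : Fin k → ℕ} (h : lexLT A B) : ¬ lexLT B A := by
  rw [lexLT_iff_toLex_lt] at h ⊢
  exact h.asymm

lemma revLexLT_asymm {k : ℕ} {A B : Fin k → ℕ} (h : revLexLT A B) : ¬ revLexLT B A := by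
  rw [revLexLT_iff_toColex_lt] at h ⊢
  exact h.asymm

lemma forall_lt_eq_or_exists_first_ne (m : ℕ) (a₁ a₂ : ℕ → ℕ) :
    (∀ j < m, a₁ j = a₂ j) ∨ ∃ t < m, (∀ j < t, a₁ j = a₂ j) ∧ a₁ t ≠ a₂ t := by
  classical
  by_cases h : ∃ t < m, a₁ t ≠ a₂ t
  · obtain ⟨htm, hne⟩ := Nat.find_spec h
    refine .inr ⟨Nat.find h, htm, fun j hj => ?_, hne⟩
    by_contra hj'
    exact Nat.find_min h hj ⟨hj.trans htm, hj'⟩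
  · push Not at h
    exact .inl h

lemma Nat.count_congr_of_forall_lt {p q : ℕ → Prop} [DecidablePred p] [DecidablePred q] {t : ℕ}
    (h : ∀ j < t, p j ↔ q j) : Nat.count p t = Nat.count q t :=
  (Nat.count_mono_left fun j hj => (h j hj).1).antisymm
    (Nat.count_mono_left fun j hj => (h j hj).2)

lemma Monotone.count_eq_of_lt_apply {a : ℕ → ℕ} (ha : Monotone a) {t m x : ℕ} (htm : t ≤ m)
    (hx : x < a t) : Nat.count (a · = x) m = Nat.count (a · = x) t := by
  obtain ⟨k, rfl⟩ := Nat.exists_eq_add_of_le htm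
  rw [Nat.count_add, add_eq_left, Nat.count_iff_forall_not]
  intro j _ hj
  have := ha (Nat.le_add_right t j)
  omega

section

variable {n m t : ℕ} {a₁ a₂ : ℕ → ℕ}

lemma expOf_eq_count (a : ℕ → ℕ) (x : Fin (n + 1)) : expOf n m a x = Nat.count (a · = x) m :=
  (Nat.count_eq_card_filter_range _ _).symm

lemma expOf_congr (h : ∀ j < m, a₁ j = a₂ j) : expOf n m a₁ = expOf n m a₂ := by
  funext x
  simp only [expOf_eq_count]
  exact Nat.count_congr_of_forall_lt fun j hj => by rw [h j hj]

lemma lexLT_expOf (h₁ : Monotone a₁) (h₂ : Monotone a₂) (hb₂ : ∀ i < m, a₂ i ≤ n)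
    (ht : t < m) (hpre : ∀ j < t, a₁ j = a₂ j) (hlt : a₂ t < a₁ t) :
    lexLT (expOf n m a₁) (expOf n m a₂) := by
  have hcount : ∀ x < a₁ t, Nat.count (a₁ · = x) m = Nat.count (a₂ · = x) t := fun x hx =>
    (h₁.count_eq_of_lt_apply ht.le hx).trans
      (Nat.count_congr_of_forall_lt fun j hj => by rw [hpre j hj])
  refine ⟨⟨a₂ t, Nat.lt_succ_of_le (hb₂ t ht)⟩, ?_, fun x hx => ?_⟩
  · rw [expOf_eq_count, expOf_eq_count, hcount _ hlt]
    exact (Nat.count_lt_count_succ_iff (p := (a₂ · = a₂ t)).mpr rfl).trans_le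
      (Nat.count_monotone _ ht)
  · have hxt : (x : ℕ) < a₂ t := hx
    rw [expOf_eq_count, expOf_eq_count, hcount x (hxt.trans hlt), h₂.count_eq_of_lt_apply ht.le hxt]

lemma flipOf_congr (hm : 0 < m) (h : ∀ j < m, a₁ j = a₂ j) : flipOf n m a₁ = flipOf n m a₂ := by
  funext i
  have hi := i.isLt
  unfold flipOf
  split_ifs
  · rw [h (m - 1) (by omega)]
  · rw [h 0 hm]
  · rw [h (m - i) (by omega), h (m - i - 1) (by omega)]

lemma flipOf_apply_congr (hpre : ∀ j < t, a₁ j = a₂ j) {i : Fin (m + 1)} (hi : m - t < i) :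
    flipOf n m a₁ i = flipOf n m a₂ i := by
  unfold flipOf
  split_ifs
  · omega
  · rw [hpre 0 (by omega)]
  · rw [hpre (m - i) (by omega), hpre (m - i - 1) (by omega)]

lemma revLexLT_flipOf (h₂ : Monotone a₂) (ht : t < m) (hpre : ∀ j < t, a₁ j = a₂ j)
    (hlt : a₂ t < a₁ t) : revLexLT (flipOf n m a₁) (flipOf n m a₂) := by
  refine ⟨⟨m - t, by omega⟩, ?_, fun i hi => flipOf_apply_congr hpre hi⟩
  simp only [flipOf, if_neg (show m - t ≠ 0 by omega)]
  rcases Nat.eq_zero_or_pos t with rfl | htpos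
  · simpa using hlt
  · have hprev : a₁ (t - 1) = a₂ (t - 1) := hpre (t - 1) (by omega)
    have hmono : a₂ (t - 1) ≤ a₂ t := h₂ (by omega)
    rw [if_neg (by omega), if_neg (by omega), Nat.sub_sub_self ht.le]
    omega

end

/-- The flip `P(m,n) → P(n,m)` exchanges the lexicographic and reverse
lexicographic orders. -/
theorem stmt7 {n m : ℕ} (hm : 0 < m) (a₁ a₂ : ℕ → ℕ)
    (h₁ : Monotone a₁) (h₂ : Monotone a₂)
    (hb₁ : ∀ i < m, a₁ i ≤ n) (hb₂ : ∀ i < m, a₂ i ≤ n) :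
    lexLT (expOf n m a₁) (expOf n m a₂) ↔ revLexLT (flipOf n m a₁) (flipOf n m a₂) := by
  rcases forall_lt_eq_or_exists_first_ne m a₁ a₂ with heq | ⟨t, ht, hpre, hne⟩
  · rw [expOf_congr heq, flipOf_congr hm heq]
    exact iff_of_false (fun h => lexLT_asymm h h) (fun h => revLexLT_asymm h h)
  rcases hne.lt_or_gt with hlt | hlt
  · have hpre' : ∀ j < t, a₂ j = a₁ j := fun j hj => (hpre j hj).symm
    exact iff_of_false (lexLT_asymm (lexLT_expOf h₂ h₁ hb₁ ht hpre' hlt))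
      (revLexLT_asymm (revLexLT_flipOf h₁ ht hpre' hlt))
  · exact iff_of_true (lexLT_expOf h₁ h₂ hb₂ ht hpre hlt) (revLexLT_flipOf h₂ ht hpre hlt)
end

section
/- Let I be a Borel-fixed monomial ideal of K[x_0,...,x_n] generated in degrees ≤ m, and let F be the set of degree-m monomials in I. Suppose x^A is a degree-m standard monomial (x^A ∉ I), and let k = max(A) be the largest index of a variable dividing x^A. Then for any i, x_i·x^A ∈ I if and only if (x_i/x_k)·x^A ∈ F. -/
/-!
Write `C = A + eᵢ`. If `x^C ∈ I`, some `x^D ∈ I` of degree `≤ m` divides `x^C`. Since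
`x^A ∉ I`, `D` carries the full power of `x_i` in `C`, and since `deg D < deg C` there is an
index `j ≠ i` with `D_j < C_j = A_j`; hence `x_j ∣ x^A` and `j ≤ k`. If `D_k < C_k`, then `x^D`
already divides `x^C / x_k`; otherwise `D_k = C_k > 0` and the Borel move `x_j / x_k` sends
`x^D` to a monomial of `I` dividing `x^C / x_k`.
-/

open MvPolynomial

/-- `I` is generated in degrees `≤ m`: every monomial of `I` of degree `> m` is
divisible by a monomial of `I` of degree `≤ m`. -/
def GeneratedInDegLE {n : ℕ} {K : Type*} [CommRing K]
    (I : Ideal (MvPolynomial (Fin (n + 1)) K)) (m : ℕ) : Prop :=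
  ∀ C : Fin (n + 1) →₀ ℕ, monomial C (1 : K) ∈ I → m < degSum C →
    ∃ D : Fin (n + 1) →₀ ℕ, monomial D (1 : K) ∈ I ∧ degSum D ≤ m ∧ D ≤ C

theorem monomial_one_mem_of_le {σ R : Type*} [CommSemiring R] {I : Ideal (MvPolynomial σ R)}
    {D C : σ →₀ ℕ} (hDC : D ≤ C) (hD : monomial D (1 : R) ∈ I) :
    monomial C (1 : R) ∈ I :=
  I.mem_of_dvd (monomial_dvd_monomial.2 ⟨Or.inr hDC, one_dvd _⟩) hD

section Exponents

variable {σ : Type*} {D C : σ →₀ ℕ}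

theorem Finsupp.add_single_one_le_of_lt {j : σ} (hDC : D ≤ C)
    (hj : D j < C j) : D + Finsupp.single j 1 ≤ C := by
  intro t
  rcases eq_or_ne j t with rfl | hjt
  · simpa using hj
  · simpa [hjt] using hDC t

theorem Finsupp.le_of_le_add_single_one {i : σ}
    (hDC : D ≤ C + Finsupp.single i 1) (hi : D i ≤ C i) : D ≤ C := by
  intro t
  rcases eq_or_ne i t with rfl | hit
  · exact hi
  · simpa [hit] using hDC t

end Exponents

theorem degSum_eq_degree {n : ℕ} (A : Fin (n + 1) →₀ ℕ) : degSum A = A.degree :=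
  (Finsupp.degree_eq_sum A).symm

theorem degSum_add_single_one {n : ℕ} (A : Fin (n + 1) →₀ ℕ) (i : Fin (n + 1)) :
    degSum (A + Finsupp.single i 1) = degSum A + 1 := by
  simp [degSum_eq_degree]

theorem degSum_tsub_single_one {n : ℕ} {C : Fin (n + 1) →₀ ℕ} {k : Fin (n + 1)} (hk : C k ≠ 0) :
    degSum (C - Finsupp.single k 1) + 1 = degSum C := by
  rw [← degSum_add_single_one, tsub_add_cancel_of_le (Finsupp.single_le_iff.2 (by omega))]

theorem exists_lt_of_degSum_lt {n : ℕ} {D C : Fin (n + 1) →₀ ℕ} (h : degSum D < degSum C) :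
    ∃ j, D j < C j := by
  by_contra! hle
  exact h.not_ge (Finset.sum_le_sum fun j _ => hle j)

theorem BorelCombinatorial.monomial_tsub_single_one_mem {n : ℕ} {K : Type*} [CommRing K]
    {I : Ideal (MvPolynomial (Fin (n + 1)) K)} (hB : BorelCombinatorial I)
    {D C : Fin (n + 1) →₀ ℕ} (hD : monomial D (1 : K) ∈ I) (hDC : D ≤ C)
    {j k : Fin (n + 1)} (hj : D j < C j) (hjk : j ≤ k) (hCk : C k ≠ 0) :
    monomial (C - Finsupp.single k 1) (1 : K) ∈ I := by
  rcases (hDC k).lt_or_eq with hlt | heq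
  · exact monomial_one_mem_of_le
      (le_tsub_of_add_le_right (Finsupp.add_single_one_le_of_lt hDC hlt)) hD
  · have hjk' : j < k := hjk.lt_of_ne (by rintro rfl; exact hj.ne heq)
    exact monomial_one_mem_of_le
      (tsub_le_tsub_right (Finsupp.add_single_one_le_of_lt hDC hj) _)
      (hB D hD k (heq ▸ hCk) j hjk')

theorem stmt9_general {n m : ℕ} {K : Type*} [Field K]
    (I : Ideal (MvPolynomial (Fin (n + 1)) K))
    (hB : BorelCombinatorial I) (hgen : GeneratedInDegLE I m)
    (A : Fin (n + 1) →₀ ℕ) (hdeg : degSum A = m) (hA : monomial A (1 : K) ∉ I)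
    (k : Fin (n + 1)) (hk : A k ≠ 0) (hkmax : ∀ j : Fin (n + 1), A j ≠ 0 → j ≤ k)
    (i : Fin (n + 1)) :
    monomial (A + Finsupp.single i 1) (1 : K) ∈ I ↔
      (monomial (A + Finsupp.single i 1 - Finsupp.single k 1) (1 : K) ∈ I ∧
        degSum (A + Finsupp.single i 1 - Finsupp.single k 1) = m) := by
  set C := A + Finsupp.single i 1
  have hdegC : degSum C = m + 1 := by rw [degSum_add_single_one, hdeg]
  have hCk : C k ≠ 0 := by simp [C, hk]
  have hdegCk : degSum (C - Finsupp.single k 1) = m := by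
    have := degSum_tsub_single_one hCk
    omega
  refine ⟨fun hC => ⟨?_, hdegCk⟩, fun h => monomial_one_mem_of_le tsub_le_self h.1⟩
  obtain ⟨D, hD, hDm, hDC⟩ := hgen C hC (by omega)
  obtain ⟨j, hj⟩ := exists_lt_of_degSum_lt (D := D) (C := C) (by omega)
  have hji : j ≠ i := by
    rintro rfl
    refine hA (monomial_one_mem_of_le (Finsupp.le_of_le_add_single_one hDC ?_) hD)
    simp only [C, Finsupp.add_apply, Finsupp.single_eq_same] at hj
    omega
  have hAj : A j ≠ 0 := by
    simp only [C, Finsupp.add_apply, Finsupp.single_eq_of_ne hji] at hj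
    omega
  exact hB.monomial_tsub_single_one_mem hD hDC hj (hkmax j hAj) hCk

/-- Lemma: for a Borel-fixed ideal `I` generated in degrees `≤ m`, a degree-`m`
standard monomial `x^A` with `k = max(A)`, and any `i`:
`x_i x^A ∈ I ↔ (x_i / x_k) x^A ∈ F` (the degree-`m` part of `I`). -/
theorem stmt9 {n m : ℕ} {K : Type*} [Field K]
    (I : Ideal (MvPolynomial (Fin (n + 1)) K)) (hI : IsMonomialIdeal I)
    (hB : BorelCombinatorial I) (hgen : GeneratedInDegLE I m)
    (A : Fin (n + 1) →₀ ℕ) (hdeg : degSum A = m) (hA : monomial A (1 : K) ∉ I)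
    (k : Fin (n + 1)) (hk : A k ≠ 0) (hkmax : ∀ j : Fin (n + 1), A j ≠ 0 → j ≤ k)
    (i : Fin (n + 1)) :
    monomial (A + Finsupp.single i 1) (1 : K) ∈ I ↔
      (monomial (A + Finsupp.single i 1 - Finsupp.single k 1) (1 : K) ∈ I ∧
        degSum (A + Finsupp.single i 1 - Finsupp.single k 1) = m) :=
  stmt9_general I hB hgen A hdeg hA k hk hkmax i
end

section
/- Consider the Hilbert scheme of 3 points in P². Every Borel-fixed saturated ideal of K[x,y,z] with Hilbert polynomial 3 (constant) is either (x², xy, y²) or (x, y³). -/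
open MvPolynomial

namespace Stmt12Aux

/-! ### Finsupp arithmetic over `Fin 3` -/

lemma decomp3 (A : Fin 3 →₀ ℕ) :
    A = Finsupp.single 0 (A 0) + Finsupp.single 1 (A 1) + Finsupp.single 2 (A 2) := by
  ext i; fin_cases i <;> simp [Finsupp.single_apply]

lemma deg3 (a b c : ℕ) :
    (Finsupp.single (0 : Fin 3) a + Finsupp.single 1 b + Finsupp.single 2 c).degree
      = a + b + c := by
  rw [Finsupp.degree_apply, Finset.sum_subset (Finset.subset_univ _)
    (fun i _ hi => Finsupp.notMem_support_iff.mp hi), Fin.sum_univ_three]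
  simp [Finsupp.single_apply]

lemma degA (A : Fin 3 →₀ ℕ) : A.degree = A 0 + A 1 + A 2 := by
  conv_lhs => rw [decomp3 A]
  exact deg3 _ _ _

lemma sub_add_cancel3 (A B : Fin 3 →₀ ℕ) (h : ∀ j, B j ≤ A j) :
    (A - B) + B = A := by
  ext j
  have := h j
  simp only [Finsupp.add_apply, Finsupp.tsub_apply]
  omega

section
variable {K : Type*} [Field K] {I : Ideal (MvPolynomial (Fin 3) K)}

/-! ### The staircase predicate -/

variable (I) in
def Pm (a b : ℕ) : Prop :=
  monomial (Finsupp.single (0 : Fin 3) a + Finsupp.single 1 b) (1 : K) ∈ I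

variable (hB : ∀ A : Fin 3 →₀ ℕ, monomial A (1 : K) ∈ I →
    ∀ j : Fin 3, A j ≠ 0 → ∀ i : Fin 3, i < j →
      monomial (A + Finsupp.single i 1 - Finsupp.single j 1) (1 : K) ∈ I)
variable (hsat : ∀ f : MvPolynomial (Fin 3) K,
      (∃ k : ℕ, ∀ i : Fin 3, (X i) ^ k * f ∈ I) → f ∈ I)

include hB hsat in
lemma strip1 (B : Fin 3 →₀ ℕ) (h : monomial (B + Finsupp.single 2 1) (1 : K) ∈ I) :
    monomial B (1 : K) ∈ I := by
  apply hsat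
  refine ⟨1, fun i => ?_⟩
  have key : ∀ i : Fin 3, i < 2 →
      monomial (B + Finsupp.single i 1) (1 : K) ∈ I := by
    intro i hi
    have h2 : (B + Finsupp.single 2 1 : Fin 3 →₀ ℕ) 2 ≠ 0 := by simp
    have := hB _ h 2 h2 i hi
    have e : (B + Finsupp.single (2:Fin 3) 1 + Finsupp.single i 1 - Finsupp.single 2 1)
        = B + Finsupp.single i 1 := by
      ext j
      rcases eq_or_ne j 2 with rfl | hj
      · have : i ≠ (2 : Fin 3) := ne_of_lt hi
        simp [Finsupp.single_apply, this]
      · simp [Finsupp.single_apply, Ne.symm hj]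
    rwa [e] at this
  have em : ∀ i : Fin 3, (X i) ^ 1 * monomial B (1:K) = monomial (B + Finsupp.single i 1) 1 := by
    intro i
    rw [pow_one, X, monomial_mul, one_mul, add_comm]
  rw [em]
  fin_cases i
  · exact key 0 (by decide)
  · exact key 1 (by decide)
  · exact h

include hB hsat in
lemma stripz (a b : ℕ) : ∀ c : ℕ,
    monomial (Finsupp.single (0:Fin 3) a + Finsupp.single 1 b + Finsupp.single 2 c) (1 : K) ∈ I →
    Pm I a b := by
  intro c
  induction c with
  | zero => intro h; simpa [Pm] using h
  | succ c ih =>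
    intro h
    apply ih
    apply strip1 hB hsat
    have e : Finsupp.single (0:Fin 3) a + Finsupp.single 1 b + Finsupp.single 2 c
        + Finsupp.single 2 1
        = Finsupp.single (0:Fin 3) a + Finsupp.single 1 b + Finsupp.single 2 (c+1) := by
      ext j; fin_cases j <;> simp [Finsupp.single_apply]
    rwa [e]

lemma Pm_up_x {a b : ℕ} (h : Pm I a b) : Pm I (a+1) b := by
  have e : Finsupp.single (0:Fin 3) (a+1) + Finsupp.single 1 b
      = Finsupp.single (0:Fin 3) 1 + (Finsupp.single (0:Fin 3) a + Finsupp.single 1 b) := by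
    ext j; fin_cases j <;> simp [Finsupp.single_apply] <;> omega
  unfold Pm at *
  rw [e, ← one_mul (1:K), ← monomial_mul]
  exact Ideal.mul_mem_left _ _ h

lemma Pm_up_y {a b : ℕ} (h : Pm I a b) : Pm I a (b+1) := by
  have e : Finsupp.single (0:Fin 3) a + Finsupp.single 1 (b+1)
      = Finsupp.single (1:Fin 3) 1 + (Finsupp.single (0:Fin 3) a + Finsupp.single 1 b) := by
    ext j; fin_cases j <;> simp [Finsupp.single_apply] <;> omega
  unfold Pm at *
  rw [e, ← one_mul (1:K), ← monomial_mul]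
  exact Ideal.mul_mem_left _ _ h

lemma Pm_mono {a b a' b' : ℕ} (ha : a' ≤ a) (hb : b' ≤ b) (h : Pm I a' b') : Pm I a b := by
  induction a, ha using Nat.le_induction with
  | base =>
    induction b, hb using Nat.le_induction with
    | base => exact h
    | succ b hb ih => exact Pm_up_y ih
  | succ a ha ih => exact Pm_up_x ih

include hB in
lemma Pm_borel {a b : ℕ} (h : Pm I a (b+1)) : Pm I (a+1) b := by
  have h1 : (Finsupp.single (0:Fin 3) a + Finsupp.single 1 (b+1) : Fin 3 →₀ ℕ) 1 ≠ 0 := by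
    simp [Finsupp.single_apply]
  have := hB _ h 1 h1 0 (by decide)
  have e : Finsupp.single (0:Fin 3) a + Finsupp.single 1 (b+1) + Finsupp.single 0 1
      - Finsupp.single 1 1 = Finsupp.single (0:Fin 3) (a+1) + Finsupp.single 1 b := by
    ext j; fin_cases j <;> simp [Finsupp.single_apply]
  rwa [e] at this

lemma mem_of_Pm {a b c : ℕ} (h : Pm I a b) :
    monomial (Finsupp.single (0:Fin 3) a + Finsupp.single 1 b + Finsupp.single 2 c) (1:K) ∈ I := by
  have e : Finsupp.single (0:Fin 3) a + Finsupp.single 1 b + Finsupp.single 2 c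
      = Finsupp.single (2:Fin 3) c + (Finsupp.single (0:Fin 3) a + Finsupp.single 1 b) := by
    ext j; fin_cases j <;> simp [Finsupp.single_apply]
  rw [e, ← one_mul (1:K), ← monomial_mul]
  exact Ideal.mul_mem_left _ _ h

/-! ### The finite staircase sets -/

open scoped Classical in
variable (I) in
noncomputable def sd (d : ℕ) : Finset (ℕ × ℕ) :=
  ((Finset.range (d+1)) ×ˢ (Finset.range (d+1))).filter
    (fun p => p.1 + p.2 ≤ d ∧ ¬ Pm I p.1 p.2)

lemma mem_sd {d : ℕ} {p : ℕ × ℕ} :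
    p ∈ sd I d ↔ p.1 + p.2 ≤ d ∧ ¬ Pm I p.1 p.2 := by
  classical
  simp only [sd, Finset.mem_filter, Finset.mem_product, Finset.mem_range]
  constructor
  · tauto
  · intro h; exact ⟨⟨by omega, by omega⟩, h⟩

/-! ### Spanning and linear independence -/

lemma hspan (d : ℕ) : homogeneousSubmodule (Fin 3) K d =
    Submodule.span K ((fun A : Fin 3 →₀ ℕ => (monomial A (1:K))) '' {A | A.degree = d}) := by
  apply le_antisymm
  · intro p hp
    rw [mem_homogeneousSubmodule] at hp
    rw [p.as_sum]
    apply Submodule.sum_mem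
    intro A hA
    have h1 : (monomial A) (coeff A p) = coeff A p • monomial A (1:K) := by
      rw [smul_monomial, smul_eq_mul, mul_one]
    rw [h1]
    exact Submodule.smul_mem _ _ (Submodule.subset_span
      ⟨A, by rw [Set.mem_setOf_eq, Finsupp.degree_eq_weight_one];
             exact hp (MvPolynomial.mem_support_iff.mp hA), rfl⟩)
  · rw [Submodule.span_le]
    rintro _ ⟨A, hA, rfl⟩
    rw [SetLike.mem_coe, mem_homogeneousSubmodule]
    exact isHomogeneous_monomial _ hA

noncomputable def expo (d : ℕ) (p : ℕ × ℕ) : Fin 3 →₀ ℕ :=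
  Finsupp.single 0 p.1 + Finsupp.single 1 p.2 + Finsupp.single 2 (d - p.1 - p.2)

lemma expo_apply0 (d : ℕ) (p : ℕ × ℕ) : expo d p 0 = p.1 := by
  simp [expo, Finsupp.single_apply]
lemma expo_apply1 (d : ℕ) (p : ℕ × ℕ) : expo d p 1 = p.2 := by
  simp [expo, Finsupp.single_apply]

variable (I) in
noncomputable def bfam (d : ℕ) (p : ↥(sd I d)) : MvPolynomial (Fin 3) K ⧸ I :=
  Ideal.Quotient.mk I (monomial (expo d p.1) 1)

lemma map_eq_span (d : ℕ) :
    Submodule.map (Ideal.Quotient.mkₐ K I).toLinearMap (homogeneousSubmodule (Fin 3) K d)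
      = Submodule.span K (Set.range (bfam I d)) := by
  rw [hspan, Submodule.map_span]
  apply le_antisymm
  · rw [Submodule.span_le]
    rintro _ ⟨_, ⟨A, hA, rfl⟩, rfl⟩
    simp only [AlgHom.toLinearMap_apply, Ideal.Quotient.mkₐ_eq_mk]
    by_cases hin : monomial A (1:K) ∈ I
    · rw [Ideal.Quotient.eq_zero_iff_mem.mpr hin]
      exact Submodule.zero_mem _
    · have hd : A 0 + A 1 + A 2 = d := by rw [← degA]; exact hA
      have hp : ((A 0, A 1) : ℕ × ℕ) ∈ sd I d := by
        rw [mem_sd]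
        refine ⟨by omega, fun hPm => hin ?_⟩
        rw [decomp3 A]
        exact mem_of_Pm hPm
      have he : expo d (A 0, A 1) = A := by
        conv_rhs => rw [decomp3 A]
        unfold expo
        congr 2
        omega
      apply Submodule.subset_span
      exact ⟨⟨_, hp⟩, by rw [bfam, he]⟩
  · rw [Submodule.span_le]
    rintro _ ⟨⟨p, hp⟩, rfl⟩
    apply Submodule.subset_span
    rw [mem_sd] at hp
    refine ⟨monomial (expo d p) 1, ⟨expo d p, ?_, rfl⟩, by simp [bfam]⟩
    rw [Set.mem_setOf_eq, expo, deg3]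
    omega

include hB hsat in
lemma lin_indep (hI : ∀ p ∈ I, ∀ A ∈ p.support, monomial A (1:K) ∈ I) (d : ℕ) :
    LinearIndependent K (bfam I d) := by
  rw [Fintype.linearIndependent_iff]
  intro g hg i
  by_contra hgi
  set q : MvPolynomial (Fin 3) K := ∑ p : ↥(sd I d), g p • monomial (expo d p.1) 1 with hq
  have hmk : Ideal.Quotient.mk I q = 0 := by
    rw [hq, map_sum]
    rw [← hg]
    apply Finset.sum_congr rfl
    intro p _
    rw [← Ideal.Quotient.mkₐ_eq_mk (R₁ := K), map_smul]
    rfl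
  have hqI : q ∈ I := Ideal.Quotient.eq_zero_iff_mem.mp hmk
  have hcoeff : coeff (expo d i.1) q = g i := by
    rw [hq, coeff_sum]
    rw [Finset.sum_eq_single i]
    · simp
    · intro p _ hpi
      have hne : expo d p.1 ≠ expo d i.1 := by
        intro he
        apply hpi
        have h0 := congrArg (fun f => f 0) he
        have h1 := congrArg (fun f => f 1) he
        simp only [expo_apply0, expo_apply1] at h0 h1
        exact Subtype.ext (Prod.ext h0 h1)
      simp [coeff_smul, coeff_monomial, hne]
    · intro h; exact absurd (Finset.mem_univ i) h
  have hsup : expo d i.1 ∈ q.support := by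
    rw [MvPolynomial.mem_support_iff, hcoeff]; exact hgi
  have hmono : monomial (expo d i.1) (1:K) ∈ I := hI q hqI _ hsup
  have hPm : Pm I i.1.1 i.1.2 := stripz hB hsat _ _ _ hmono
  have := i.2
  rw [mem_sd] at this
  exact this.2 hPm

include hB hsat in
lemma finrank_eq (hI : ∀ p ∈ I, ∀ A ∈ p.support, monomial A (1:K) ∈ I) (d : ℕ) :
    Module.finrank K
      ↥(Submodule.map (Ideal.Quotient.mkₐ K I).toLinearMap
          (homogeneousSubmodule (Fin 3) K d)) = (sd I d).card := by
  rw [map_eq_span, finrank_span_eq_card (lin_indep hB hsat hI d), Fintype.card_coe]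

lemma sd_mono {d e : ℕ} (h : d ≤ e) : sd I d ⊆ sd I e := by
  intro p hp
  rw [mem_sd] at *
  exact ⟨le_trans hp.1 h, hp.2⟩

lemma mono_eq (a b : ℕ) :
    (monomial (Finsupp.single (0:Fin 3) a + Finsupp.single 1 b) (1:K)) = X 0 ^ a * X 1 ^ b := by
  rw [X_pow_eq_monomial, X_pow_eq_monomial, monomial_mul, one_mul]

lemma divis (A B : Fin 3 →₀ ℕ) (h : ∀ j, B j ≤ A j) :
    monomial A (1:K) = monomial (A - B) 1 * monomial B 1 := by
  rw [monomial_mul, one_mul, sub_add_cancel3 A B h]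

end

end Stmt12Aux

set_option maxHeartbeats 1000000 in
open Stmt12Aux in
/-- On the Hilbert scheme of 3 points in `ℙ²`: every saturated Borel-fixed ideal of
`K[x,y,z]` (variables `X 0 = x > X 1 = y > X 2 = z`) with constant Hilbert
polynomial `3` is `(x², xy, y²)` or `(x, y³)`. -/
theorem stmt12 {K : Type*} [Field K] [CharZero K] [IsAlgClosed K]
    (I : Ideal (MvPolynomial (Fin 3) K))
    (hI : IsMonomialIdeal (n := 2) I) (hB : BorelCombinatorial (n := 2) I)
    (hsat : ∀ f : MvPolynomial (Fin 3) K,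
      (∃ k : ℕ, ∀ i : Fin 3, (X i) ^ k * f ∈ I) → f ∈ I)
    (hHP : ∃ N : ℕ, ∀ d : ℕ, N ≤ d →
      Module.finrank K
        ↥(Submodule.map (Ideal.Quotient.mkₐ K I).toLinearMap
            (homogeneousSubmodule (Fin 3) K d)) = 3) :
    I = Ideal.span {X 0 ^ 2, X 0 * X 1, X 1 ^ 2} ∨
      I = Ideal.span {X 0, X 1 ^ 3} := by
  classical
  have hB' : ∀ A : Fin 3 →₀ ℕ, monomial A (1 : K) ∈ I →
      ∀ j : Fin 3, A j ≠ 0 → ∀ i : Fin 3, i < j →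
        monomial (A + Finsupp.single i 1 - Finsupp.single j 1) (1 : K) ∈ I := hB
  have hI' : ∀ p ∈ I, ∀ A ∈ p.support, monomial A (1 : K) ∈ I := hI
  obtain ⟨N, hN⟩ := hHP
  have h3 : ∀ d, N ≤ d → (sd I d).card = 3 := fun d hd => by
    rw [← finrank_eq hB' hsat hI' d]; exact hN d hd
  set s := sd I N with hs
  have hcard : s.card = 3 := h3 N le_rfl
  have hstab : ∀ d, N ≤ d → sd I d = s := fun d hd =>
    (Finset.eq_of_subset_of_card_le (sd_mono hd) (by rw [h3 d hd, hcard])).symm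
  have hT : ∀ a b : ℕ, ¬ Pm I a b ↔ (a, b) ∈ s := by
    intro a b
    constructor
    · intro h
      have h1 : ((a, b) : ℕ × ℕ) ∈ sd I (N + a + b) := mem_sd.mpr ⟨by omega, h⟩
      rw [hstab (N + a + b) (by omega)] at h1
      exact h1
    · intro h
      have h1 : ((a, b) : ℕ × ℕ) ∈ sd I N := by rw [← hs]; exact h
      exact (mem_sd.mp h1).2
  -- basic structure of s
  have h00 : ((0, 0) : ℕ × ℕ) ∈ s := by
    rw [← hT]
    intro h0
    have h1 : (1 : MvPolynomial (Fin 3) K) ∈ I := by simpa [Pm] using h0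
    have hItop : I = ⊤ := (Ideal.eq_top_iff_one _).mpr h1
    have hempty : s = ∅ := by
      apply Finset.eq_empty_of_forall_notMem
      intro p hp
      exact ((mem_sd).mp hp).2 (by unfold Pm; rw [hItop]; exact Submodule.mem_top)
    rw [hempty] at hcard
    simp at hcard
  have hdc : ∀ a b a' b' : ℕ, (a, b) ∈ s → a' ≤ a → b' ≤ b → (a', b') ∈ s := by
    intro a b a' b' hm ha hb
    rw [← hT] at *
    exact fun h => hm (Pm_mono ha hb h)
  have hc3 : ∀ a b : ℕ, (a + 1, b) ∈ s → (a, b + 1) ∈ s := by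
    intro a b hm
    rw [← hT] at *
    exact fun h => hm (Pm_borel hB' h)
  -- the key extraction lemma: monomials of I give Pm
  have hkey : ∀ A : Fin 3 →₀ ℕ, monomial A (1 : K) ∈ I → Pm I (A 0) (A 1) := by
    intro A hm
    exact stripz hB' hsat _ _ _ (by rw [← decomp3]; exact hm)
  by_cases h10 : ((1, 0) : ℕ × ℕ) ∈ s
  · -- case (x², xy, y²)
    left
    have h01 : ((0, 1) : ℕ × ℕ) ∈ s := hc3 0 0 h10
    have hseq : s = {(0, 0), (1, 0), (0, 1)} := by
      refine (Finset.eq_of_subset_of_card_le ?_ (by rw [hcard]; decide)).symm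
      intro p hp
      simp only [Finset.mem_insert, Finset.mem_singleton] at hp
      rcases hp with rfl | rfl | rfl <;> assumption
    apply le_antisymm
    · intro p hp
      rw [p.as_sum]
      apply Ideal.sum_mem
      intro A hA
      have hm : monomial A (1 : K) ∈ I := hI' p hp A hA
      have hPm : Pm I (A 0) (A 1) := hkey A hm
      have hnmem : ((A 0, A 1) : ℕ × ℕ) ∉ s := fun hmem => (hT _ _).mpr hmem hPm
      rw [hseq] at hnmem
      have hge : 2 ≤ A 0 + A 1 := by
        by_contra hlt
        push_neg at hlt
        apply hnmem
        simp only [Finset.mem_insert, Finset.mem_singleton, Prod.mk.injEq]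
        omega
      have hC : (monomial A) (coeff A p) = C (coeff A p) * monomial A 1 := by
        rw [C_mul_monomial, mul_one]
      rw [hC]
      apply Ideal.mul_mem_left
      rcases (by omega : 2 ≤ A 0 ∨ (1 ≤ A 0 ∧ 1 ≤ A 1) ∨ 2 ≤ A 1) with h | h | h
      · rw [divis A (Finsupp.single 0 2)
          (by intro j; fin_cases j <;> simp [Finsupp.single_apply] <;> omega)]
        apply Ideal.mul_mem_left
        rw [← X_pow_eq_monomial]
        exact Ideal.subset_span (by simp)
      · rw [divis A (Finsupp.single 0 1 + Finsupp.single 1 1)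
          (by intro j; fin_cases j <;> simp [Finsupp.single_apply] <;> omega)]
        apply Ideal.mul_mem_left
        rw [mono_eq]
        simp only [pow_one]
        exact Ideal.subset_span (by simp)
      · rw [divis A (Finsupp.single 1 2)
          (by intro j; fin_cases j <;> simp [Finsupp.single_apply] <;> omega)]
        apply Ideal.mul_mem_left
        rw [← X_pow_eq_monomial]
        exact Ideal.subset_span (by simp)
    · rw [Ideal.span_le]
      rintro f hf
      simp only [Set.mem_insert_iff, Set.mem_singleton_iff] at hf
      have hgen : ∀ a b : ℕ, ((a, b) : ℕ × ℕ) ∉ s → X 0 ^ a * X 1 ^ b ∈ I := by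
        intro a b hnm
        have hPm : Pm I a b := not_not.mp (fun h => hnm ((hT _ _).mp h))
        unfold Pm at hPm
        rwa [mono_eq] at hPm
      rcases hf with rfl | rfl | rfl
      · have := hgen 2 0 (by rw [hseq]; decide)
        simpa using this
      · have := hgen 1 1 (by rw [hseq]; decide)
        simpa using this
      · have := hgen 0 2 (by rw [hseq]; decide)
        simpa using this
  · -- case (x, y³)
    right
    have hall0 : ∀ p ∈ s, p.1 = 0 := by
      intro p hp
      by_contra hne
      exact h10 (hdc p.1 p.2 1 0 (by rwa [Prod.mk.eta]) (by omega) (by omega))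
    have hbig : ∃ p ∈ s, 2 ≤ p.2 := by
      by_contra hsmall
      push_neg at hsmall
      have hsub : s ⊆ ({(0, 0), (0, 1)} : Finset (ℕ × ℕ)) := by
        intro p hp
        have h1 := hall0 p hp
        have h2 := hsmall p hp
        rcases p with ⟨a, b⟩
        simp only at h1 h2
        subst h1
        have : b = 0 ∨ b = 1 := by omega
        rcases this with rfl | rfl <;> simp
      have := Finset.card_le_card hsub
      rw [hcard] at this
      have : (({(0, 0), (0, 1)} : Finset (ℕ × ℕ))).card ≤ 2 := by decide
      omega
    obtain ⟨p, hp, hp2⟩ := hbig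
    have h02 : ((0, 2) : ℕ × ℕ) ∈ s := by
      have := hdc p.1 p.2 0 2 (by rwa [Prod.mk.eta]) (by omega) hp2
      exact this
    have h01 : ((0, 1) : ℕ × ℕ) ∈ s := hdc 0 2 0 1 h02 le_rfl (by omega)
    have hseq : s = {(0, 0), (0, 1), (0, 2)} := by
      refine (Finset.eq_of_subset_of_card_le ?_ (by rw [hcard]; decide)).symm
      intro q hq
      simp only [Finset.mem_insert, Finset.mem_singleton] at hq
      rcases hq with rfl | rfl | rfl <;> assumption
    apply le_antisymm
    · intro p hp
      rw [p.as_sum]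
      apply Ideal.sum_mem
      intro A hA
      have hm : monomial A (1 : K) ∈ I := hI' p hp A hA
      have hPm : Pm I (A 0) (A 1) := hkey A hm
      have hnmem : ((A 0, A 1) : ℕ × ℕ) ∉ s := fun hmem => (hT _ _).mpr hmem hPm
      rw [hseq] at hnmem
      have hge : 1 ≤ A 0 ∨ 3 ≤ A 1 := by
        by_contra hlt
        push_neg at hlt
        apply hnmem
        simp only [Finset.mem_insert, Finset.mem_singleton, Prod.mk.injEq]
        omega
      have hC : (monomial A) (coeff A p) = C (coeff A p) * monomial A 1 := by
        rw [C_mul_monomial, mul_one]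
      rw [hC]
      apply Ideal.mul_mem_left
      rcases hge with h | h
      · rw [divis A (Finsupp.single 0 1)
          (by intro j; fin_cases j <;> simp [Finsupp.single_apply] <;> omega)]
        apply Ideal.mul_mem_left
        rw [show (monomial (Finsupp.single (0:Fin 3) 1) (1:K)) = X 0 by
          rw [← X_pow_eq_monomial, pow_one]]
        exact Ideal.subset_span (by simp)
      · rw [divis A (Finsupp.single 1 3)
          (by intro j; fin_cases j <;> simp [Finsupp.single_apply] <;> omega)]
        apply Ideal.mul_mem_left
        rw [← X_pow_eq_monomial]
        exact Ideal.subset_span (by simp)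
    · rw [Ideal.span_le]
      rintro f hf
      simp only [Set.mem_insert_iff, Set.mem_singleton_iff] at hf
      have hgen : ∀ a b : ℕ, ((a, b) : ℕ × ℕ) ∉ s → X 0 ^ a * X 1 ^ b ∈ I := by
        intro a b hnm
        have hPm : Pm I a b := not_not.mp (fun h => hnm ((hT _ _).mp h))
        unfold Pm at hPm
        rwa [mono_eq] at hPm
      rcases hf with rfl | rfl
      · have := hgen 1 0 (by rw [hseq]; decide)
        simpa using this
      · have := hgen 0 3 (by rw [hseq]; decide)
        simpa using this
end

section
/- Let p(z) be the Hilbert polynomial written in Macaulay's form p(z) = Σ_{i=0}^{s} [ C(z+i, i+1) - C(z+i-m_i, i+1) ] with integers m_0 ≥ m_1 ≥ ... ≥ m_s ≥ 1. Then this representation with m_s ≠ 0 is unique: the integers m_0,...,m_s are uniquely determined by p. -/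
/-- The binomial coefficient `C(z, k) = z(z-1)⋯(z-k+1)/k!` as a function of a
rational argument `z`. -/
noncomputable def qchoose (z : ℚ) (k : ℕ) : ℚ :=
  (descPochhammer ℚ k).eval z / (k.factorial : ℚ)

/-- Macaulay's expression `g(m_0, …, m_s; z) = ∑_{i=0}^{s} [C(z+i, i+1) - C(z+i-m_i, i+1)]`. -/
noncomputable def macaulayFun (s : ℕ) (mv : ℕ → ℕ) (z : ℚ) : ℚ :=
  ∑ i ∈ Finset.range (s + 1),
    (qchoose (z + i) (i + 1) - qchoose (z + i - mv i) (i + 1))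

/-!
Each summand `C(z+i, i+1) - C(z+i-m, i+1)` of Macaulay's expression `g` has, by Pascal's rule, the
constant `m` as its `i`-th forward difference `Δ^i`, so its higher differences vanish. Hence
`Δ^s g = m_s` and `Δ^{s+1} g = 0`; since `m_s ≠ 0`, `g` determines `s` and `m_s`.
Removing the top summand and inducting on `s` recovers the remaining `m_i`.
-/

open Finset fwdDiff fwdDiff_aux

section ForwardDifference

variable {M G : Type*} [AddCommMonoid M] [AddCommGroup G]

lemma fwdDiff_iter_sub (h : M) (f g : M → G) (n : ℕ) :
    Δ_[h] ^[n] (f - g) = Δ_[h] ^[n] f - Δ_[h] ^[n] g := by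
  simpa only [coe_fwdDiffₗ_pow] using map_sub (fwdDiffₗ M G h ^ n) f g

lemma fwdDiff_iter_eq_zero_of_eq_const (h : M) {f : M → G} {n : ℕ} {c : G}
    (hf : Δ_[h] ^[n] f = fun _ ↦ c) {t : ℕ} (hnt : n < t) : Δ_[h] ^[t] f = 0 := by
  obtain ⟨k, rfl⟩ := Nat.exists_eq_add_of_lt hnt
  rw [show n + k + 1 = k + 1 + n by omega, Function.iterate_add_apply, hf,
    Function.iterate_succ_apply, fwdDiff_const]
  exact Function.iterate_fixed (fwdDiff_const h 0) k

end ForwardDifference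

section choose

variable {R : Type*} [CommRing R] [BinomialRing R]

lemma fwdDiff_choose_add (a : R) (j : ℕ) :
    Δ_[1] (fun z ↦ Ring.choose (z + a) (j + 1)) = fun z ↦ Ring.choose (z + a) j := by
  ext z
  rw [fwdDiff, add_right_comm, Ring.choose_succ_succ, add_sub_cancel_right]

lemma fwdDiff_iter_choose_add (a : R) (j k : ℕ) :
    Δ_[1] ^[k] (fun z ↦ Ring.choose (z + a) (k + j)) = fun z ↦ Ring.choose (z + a) j := by
  induction k generalizing j with
  | zero => simp only [zero_add, Function.iterate_zero, id_eq]
  | succ k ih =>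
    rw [Function.iterate_succ_apply, add_right_comm, fwdDiff_choose_add, ih]

end choose

lemma qchoose_eq_choose (z : ℚ) (k : ℕ) : qchoose z k = Ring.choose z k := by
  rw [Ring.choose_eq_smul, qchoose, ← descPochhammer_map (Int.castRingHom ℚ),
    Polynomial.eval_map, ← Polynomial.aeval_eq_smeval, smul_eq_mul, div_eq_inv_mul]
  rfl

noncomputable def macaulayTerm (i m : ℕ) (z : ℚ) : ℚ :=
  qchoose (z + i) (i + 1) - qchoose (z + i - m) (i + 1)

lemma macaulayFun_eq_sum (s : ℕ) (mv : ℕ → ℕ) :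
    macaulayFun s mv = ∑ i ∈ range (s + 1), macaulayTerm i (mv i) := by
  ext z
  simp only [macaulayFun, macaulayTerm, Finset.sum_apply]

lemma macaulayFun_succ (s : ℕ) (mv : ℕ → ℕ) :
    macaulayFun (s + 1) mv = macaulayFun s mv + macaulayTerm (s + 1) (mv (s + 1)) := by
  rw [macaulayFun_eq_sum, macaulayFun_eq_sum, sum_range_succ]

lemma fwdDiff_iter_macaulayTerm_self (i m : ℕ) :
    Δ_[1] ^[i] (macaulayTerm i m) = fun _ ↦ (m : ℚ) := by
  have hterm : macaulayTerm i m = (fun z : ℚ ↦ Ring.choose (z + i) (i + 1)) -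
      fun z ↦ Ring.choose (z + (i - m : ℚ)) (i + 1) := by
    ext z
    simp only [macaulayTerm, qchoose_eq_choose, Pi.sub_apply, add_sub_assoc]
  ext z
  rw [hterm, fwdDiff_iter_sub, fwdDiff_iter_choose_add, fwdDiff_iter_choose_add, Pi.sub_apply,
    Ring.choose_one_right, Ring.choose_one_right]
  ring

lemma fwdDiff_iter_macaulayFun_self (s : ℕ) (mv : ℕ → ℕ) :
    Δ_[1] ^[s] (macaulayFun s mv) = fun _ ↦ (mv s : ℚ) := by
  have hlower : ∀ i ∈ range s, Δ_[1] ^[s] (macaulayTerm i (mv i)) = 0 := fun i hi ↦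
    fwdDiff_iter_eq_zero_of_eq_const 1 (fwdDiff_iter_macaulayTerm_self i (mv i)) (mem_range.mp hi)
  rw [macaulayFun_eq_sum, sum_range_succ, fwdDiff_iter_add, fwdDiff_iter_finsetSum,
    sum_eq_zero hlower, zero_add, fwdDiff_iter_macaulayTerm_self]

lemma length_le_of_macaulayFun_eq {s s' : ℕ} {mv mv' : ℕ → ℕ} (hlast' : 1 ≤ mv' s')
    (heq : macaulayFun s mv = macaulayFun s' mv') : s' ≤ s := by
  by_contra! hlt
  have hdiff := congrFun (congrArg (Δ_[1] ^[s']) heq) 0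
  rw [fwdDiff_iter_eq_zero_of_eq_const 1 (fwdDiff_iter_macaulayFun_self s mv) hlt,
    fwdDiff_iter_macaulayFun_self] at hdiff
  have hzero : (mv' s' : ℚ) = 0 := hdiff.symm
  exact absurd (Nat.cast_eq_zero.mp hzero) (Nat.one_le_iff_ne_zero.mp hlast')

lemma apply_eq_of_macaulayFun_eq {s : ℕ} {mv mv' : ℕ → ℕ}
    (heq : macaulayFun s mv = macaulayFun s mv') : mv s = mv' s := by
  have hdiff := congrFun (congrArg (Δ_[1] ^[s]) heq) 0
  rwa [fwdDiff_iter_macaulayFun_self, fwdDiff_iter_macaulayFun_self, Nat.cast_inj] at hdiff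

lemma eq_of_macaulayFun_eq {s : ℕ} {mv mv' : ℕ → ℕ}
    (heq : macaulayFun s mv = macaulayFun s mv') : ∀ i ≤ s, mv i = mv' i := by
  induction s with
  | zero => intro i hi; rw [Nat.le_zero.mp hi]; exact apply_eq_of_macaulayFun_eq heq
  | succ s ih =>
    have htop := apply_eq_of_macaulayFun_eq heq
    intro i hi
    rcases hi.lt_or_eq with hi | rfl
    · rw [macaulayFun_succ, macaulayFun_succ, htop, add_left_inj] at heq
      exact ih heq i (Nat.le_of_lt_succ hi)
    · exact htop

theorem stmt13_general (s s' : ℕ) (mv mv' : ℕ → ℕ)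
    (hlast : 1 ≤ mv s) (hlast' : 1 ≤ mv' s')
    (heq : ∀ z : ℚ, macaulayFun s mv z = macaulayFun s' mv' z) :
    s = s' ∧ ∀ i ≤ s, mv i = mv' i := by
  have heq : macaulayFun s mv = macaulayFun s' mv' := funext heq
  obtain rfl : s = s' := le_antisymm (length_le_of_macaulayFun_eq hlast heq.symm)
    (length_le_of_macaulayFun_eq hlast' heq)
  exact ⟨rfl, eq_of_macaulayFun_eq heq⟩

/-- Uniqueness of the Macaulay representation: if
`p(z) = ∑_{i=0}^{s} [C(z+i,i+1) - C(z+i-m_i,i+1)]` with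
`m_0 ≥ m_1 ≥ … ≥ m_s ≥ 1`, then `s` and the `m_i` are uniquely determined by `p`. -/
theorem stmt13 (s s' : ℕ) (mv mv' : ℕ → ℕ)
    (hmono : ∀ i j : ℕ, i ≤ j → j ≤ s → mv j ≤ mv i) (hlast : 1 ≤ mv s)
    (hmono' : ∀ i j : ℕ, i ≤ j → j ≤ s' → mv' j ≤ mv' i) (hlast' : 1 ≤ mv' s')
    (heq : ∀ z : ℚ, macaulayFun s mv z = macaulayFun s' mv' z) :
    s = s' ∧ ∀ i ≤ s, mv i = mv' i :=
  stmt13_general s s' mv mv' hlast hlast' heq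
end
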